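/- arXiv:2211.05915 — 10 statements merged into one kernel-verified Lean document; each statement's English description precedes it below -/
import Mathlib

section
/- Let p be an odd prime and let u, v be elements of ℤ/pℤ with u² = 3 and v = 1. Define sequences α, β in ℤ/pℤ by α₁ = -u, α₂ = u(2v-1-u²)/(v-u²), α₃ = -u(v-1)/(v-u²), β₁ = 1, β₂ = u²-v, β₃ = (u²+u⁴+v³-3u²v)/(v-u²)², and for all k ≥ 0: α_{3k+4} = -u, β_{3k+4} = β_{k+2}/(β_{3k+3}β_{3k+2}), β_{3k+5} = u²-v-β_{3k+4}, α_{3k+5} = u - (α_{k+2}+uv-α_{3k+2}β_{3k+4})/β_{3k+5}, α_{3k+6} = u-α_{3k+5}, β_{3k+6} = v-α_{3k+5}α_{3k+6} (assuming all divisions are valid, i.e. denominators are nonzero). Then for all k ≥ 0: α_{3k+1} = -u, α_{3k+2}+α_{3k+3} = u, α_{9k+2} = u, α_{9k+5} = α_{3k+3}, α_{9k+8} = 0, and β₁ = 1, β₂ = 2, β_{k+3} = 1. -/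
theorem stmt0 (p : ℕ) [Fact p.Prime] (hodd : p ≠ 2)
    (u v : ZMod p) (hu : u^2 = 3) (hv : v = 1)
    (α β : ℕ → ZMod p)
    (hα1 : α 1 = -u) (hα2 : α 2 = u * (2*v - 1 - u^2) / (v - u^2))
    (hα3 : α 3 = -u * (v - 1) / (v - u^2))
    (hβ1 : β 1 = 1) (hβ2 : β 2 = u^2 - v)
    (hβ3 : β 3 = (u^2 + u^4 + v^3 - 3*u^2*v) / (v - u^2)^2)
    (hrα4 : ∀ k : ℕ, α (3*k+4) = -u)
    (hrβ4 : ∀ k : ℕ, β (3*k+4) = β (k+2) / (β (3*k+3) * β (3*k+2)))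
    (hrβ5 : ∀ k : ℕ, β (3*k+5) = u^2 - v - β (3*k+4))
    (hrα5 : ∀ k : ℕ, α (3*k+5) = u - (α (k+2) + u*v - α (3*k+2) * β (3*k+4)) / β (3*k+5))
    (hrα6 : ∀ k : ℕ, α (3*k+6) = u - α (3*k+5))
    (hrβ6 : ∀ k : ℕ, β (3*k+6) = v - α (3*k+5) * α (3*k+6))
    (hden0 : v - u^2 ≠ 0)
    (hden1 : ∀ k : ℕ, β (3*k+3) * β (3*k+2) ≠ 0)
    (hden2 : ∀ k : ℕ, β (3*k+5) ≠ 0) :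
    (∀ k : ℕ, α (3*k+1) = -u ∧ α (3*k+2) + α (3*k+3) = u ∧
      α (9*k+2) = u ∧ α (9*k+5) = α (3*k+3) ∧ α (9*k+8) = 0) ∧
    β 1 = 1 ∧ β 2 = 2 ∧ (∀ k : ℕ, β (k+3) = 1) := by
  subst hv
  have hα2' : α 2 = u := by
    rw [hα2, show u * (2*(1:ZMod p) - 1 - u^2) = u * (1 - u^2) by ring]
    exact mul_div_cancel_right₀ u hden0
  have hα3' : α 3 = 0 := by rw [hα3]; norm_num
  have hβ3' : β 3 = 1 := by
    have hden : ((1:ZMod p) - u^2)^2 = 4 := by rw [hu]; norm_num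
    have hnum : u^2 + u^4 + (1:ZMod p)^3 - 3*u^2*1 = 4 := by
      rw [show u^4 = (u^2)^2 by ring, hu]; norm_num
    have h4 : (4 : ZMod p) ≠ 0 := hden ▸ pow_ne_zero 2 hden0
    rw [hβ3, hnum, hden, div_self h4]
  have key : ∀ n : ℕ, β (3*n+3) = 1 ∧ β (3*n+4) = 1 ∧ β (3*n+5) = 1 ∧
      α (3*n+3) = u - α (3*n+2) ∧ α (3*n+2) * (u - α (3*n+2)) = 0 ∧
      (n % 3 = 0 → α (3*n+2) = u) ∧ (n % 3 = 2 → α (3*n+2) = 0) ∧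
      (∀ m : ℕ, n = 3*m+1 → α (3*n+2) = u - α (3*m+2)) := by
    intro n
    induction n using Nat.strong_induction_on with
    | _ n ih =>
    cases n with
    | zero =>
      have hβ2ne : β 2 ≠ 0 := by
        have h := hden1 0
        norm_num at h
        exact h.2
      have hb4 : β 4 = 1 := by
        have h := hrβ4 0
        norm_num at h
        rw [h, hβ3', one_mul, div_self hβ2ne]
      have hb5 : β 5 = 1 := by
        have h := hrβ5 0
        norm_num at h
        rw [h, hb4, hu]; norm_num
      rw [show 3*0+3 = 3 by norm_num, show 3*0+4 = 4 by norm_num,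
          show 3*0+5 = 5 by norm_num, show 3*0+2 = 2 by norm_num]
      refine ⟨hβ3', hb4, hb5, ?_, ?_, ?_, ?_, ?_⟩
      · rw [hα3', hα2']; ring
      · rw [hα2']; ring
      · intro _; exact hα2'
      · intro h; omega
      · intro m hm; omega
    | succ j =>
      obtain ⟨hb3, hb4, hb5, hB, hC, hD, hE, hF⟩ := ih j (by omega)
      have hα5 : α (3*j+5) = α (3*j+2) - α (j+2) := by
        rw [hrα5 j, hb4, hb5]
        simp only [mul_one, div_one]
        ring
      have hval : α (3*j+5) * (u - α (3*j+5)) = 0 ∧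
          ((j+1) % 3 = 0 → α (3*j+5) = u) ∧ ((j+1) % 3 = 2 → α (3*j+5) = 0) ∧
          (∀ m : ℕ, j+1 = 3*m+1 → α (3*j+5) = u - α (3*m+2)) := by
        obtain ⟨m, hm | hm | hm⟩ : ∃ m, j = 3*m ∨ j = 3*m+1 ∨ j = 3*m+2 := ⟨j/3, by omega⟩
        · obtain ⟨_, _, _, hBm, hCm, _, _, _⟩ := ih m (by omega)
          have h2 : α (3*j+2) = u := hD (by omega)
          have h1 : α (j+2) = α (3*m+2) := by rw [hm]
          have hv5 : α (3*j+5) = u - α (3*m+2) := by rw [hα5, h2, h1]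
          refine ⟨?_, ?_, ?_, ?_⟩
          · rw [hv5]; linear_combination hCm
          · intro h; omega
          · intro h; omega
          · intro m' hm'
            have : m' = m := by omega
            subst this; exact hv5
        · obtain ⟨_, _, _, hBm, _, _, _, _⟩ := ih m (by omega)
          have h2 : α (3*j+2) = u - α (3*m+2) := hF m hm
          have h1 : α (j+2) = u - α (3*m+2) := by
            rw [show j+2 = 3*m+3 by omega]; exact hBm
          have hv5 : α (3*j+5) = 0 := by rw [hα5, h2, h1]; ring
          refine ⟨?_, ?_, ?_, ?_⟩
          · rw [hv5]; ring
          · intro h; omega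
          · intro _; exact hv5
          · intro m' hm'; omega
        · have h2 : α (3*j+2) = 0 := hE (by omega)
          have h1 : α (j+2) = -u := by
            rw [show j+2 = 3*m+4 by omega]; exact hrα4 m
          have hv5 : α (3*j+5) = u := by rw [hα5, h2, h1]; ring
          refine ⟨?_, ?_, ?_, ?_⟩
          · rw [hv5]; ring
          · intro _; exact hv5
          · intro h; omega
          · intro m' hm'; omega
      obtain ⟨hCn, hDn, hEn, hFn⟩ := hval
      have hb6 : β (3*j+6) = 1 := by
        rw [hrβ6 j, hrα6 j]; linear_combination -hCn
      have hbn2 : β (j+3) = 1 := by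
        obtain ⟨m, hm | hm | hm⟩ : ∃ m, j = 3*m ∨ j = 3*m+1 ∨ j = 3*m+2 := ⟨j/3, by omega⟩
        · have h := (ih m (by omega)).1; rwa [show j+3 = 3*m+3 by omega]
        · have h := (ih m (by omega)).2.1; rwa [show j+3 = 3*m+4 by omega]
        · have h := (ih m (by omega)).2.2.1; rwa [show j+3 = 3*m+5 by omega]
      have hb7 : β (3*j+7) = 1 := by
        have h := hrβ4 (j+1)
        rw [show 3*(j+1)+4 = 3*j+7 by ring, show 3*(j+1)+3 = 3*j+6 by ring,
            show 3*(j+1)+2 = 3*j+5 by ring, show j+1+2 = j+3 by ring] at h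
        rw [h, hbn2, hb6, hb5]; norm_num
      have hb8 : β (3*j+8) = 1 := by
        have h := hrβ5 (j+1)
        rw [show 3*(j+1)+5 = 3*j+8 by ring, show 3*(j+1)+4 = 3*j+7 by ring] at h
        rw [h, hb7, hu]; norm_num
      have hα6' : α (3*j+6) = u - α (3*j+5) := hrα6 j
      rw [show 3*(j+1)+3 = 3*j+6 by ring, show 3*(j+1)+4 = 3*j+7 by ring,
          show 3*(j+1)+5 = 3*j+8 by ring, show 3*(j+1)+2 = 3*j+5 by ring]
      exact ⟨hb6, hb7, hb8, hα6', hCn, hDn, hEn, hFn⟩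
  refine ⟨?_, hβ1, ?_, ?_⟩
  · intro k
    refine ⟨?_, ?_, ?_, ?_, ?_⟩
    · cases k with
      | zero => rw [show 3*0+1 = 1 by norm_num]; exact hα1
      | succ k => rw [show 3*(k+1)+1 = 3*k+4 by ring]; exact hrα4 k
    · rw [(key k).2.2.2.1]; ring
    · rw [show 9*k+2 = 3*(3*k)+2 by ring]
      exact (key (3*k)).2.2.2.2.2.1 (by omega)
    · rw [show 9*k+5 = 3*(3*k+1)+2 by ring, (key k).2.2.2.1]
      exact (key (3*k+1)).2.2.2.2.2.2.2 k rfl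
    · rw [show 9*k+8 = 3*(3*k+2)+2 by ring]
      exact (key (3*k+2)).2.2.2.2.2.2.1 (by omega)
  · rw [hβ2, hu]; norm_num
  · intro k
    obtain ⟨m, hm | hm | hm⟩ : ∃ m, k = 3*m ∨ k = 3*m+1 ∨ k = 3*m+2 := ⟨k/3, by omega⟩
    · rw [show k+3 = 3*m+3 by omega]; exact (key m).1
    · rw [show k+3 = 3*m+4 by omega]; exact (key m).2.1
    · rw [show k+3 = 3*m+5 by omega]; exact (key m).2.2.1
end

section
/- Let p be an odd prime and let u, v ∈ ℤ/pℤ with u² = -3 and v = -1. Define sequences α, β by the recurrences α₁ = -u, α₂ = u(2v-1-u²)/(v-u²), α₃ = -u(v-1)/(v-u²), β₁ = 1, β₂ = u²-v, β₃ = (u²+u⁴+v³-3u²v)/(v-u²)², and for k ≥ 0: α_{3k+4} = -u, β_{3k+4} = β_{k+2}/(β_{3k+3}β_{3k+2}), β_{3k+5} = u²-v-β_{3k+4}, α_{3k+5} = u - (α_{k+2}+uv-α_{3k+2}β_{3k+4})/β_{3k+5}, α_{3k+6} = u-α_{3k+5}, β_{3k+6} = v-α_{3k+5}α_{3k+6}.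 Then for all k ≥ 0: α_{3k+1} = -u, α_{3k+2}+α_{3k+3} = u, α_{9k+2} = 0, α_{9k+5} = α_{3k+2}, α_{9k+8} = u, and β₁ = 1, β₂ = -2, β_{k+3} = -1. In particular β_i ≠ 0 for all i ≥ 1. -/
theorem stmt1 (p : ℕ) [Fact p.Prime] (hodd : p ≠ 2)
    (u v : ZMod p) (hu : u^2 = -3) (hv : v = -1)
    (α β : ℕ → ZMod p)
    (hα1 : α 1 = -u) (hα2 : α 2 = u * (2*v - 1 - u^2) / (v - u^2))
    (hα3 : α 3 = -u * (v - 1) / (v - u^2))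
    (hβ1 : β 1 = 1) (hβ2 : β 2 = u^2 - v)
    (hβ3 : β 3 = (u^2 + u^4 + v^3 - 3*u^2*v) / (v - u^2)^2)
    (hrα4 : ∀ k : ℕ, α (3*k+4) = -u)
    (hrβ4 : ∀ k : ℕ, β (3*k+4) = β (k+2) / (β (3*k+3) * β (3*k+2)))
    (hrβ5 : ∀ k : ℕ, β (3*k+5) = u^2 - v - β (3*k+4))
    (hrα5 : ∀ k : ℕ, α (3*k+5) = u - (α (k+2) + u*v - α (3*k+2) * β (3*k+4)) / β (3*k+5))
    (hrα6 : ∀ k : ℕ, α (3*k+6) = u - α (3*k+5))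
    (hrβ6 : ∀ k : ℕ, β (3*k+6) = v - α (3*k+5) * α (3*k+6)) :
    (∀ k : ℕ, α (3*k+1) = -u ∧ α (3*k+2) + α (3*k+3) = u ∧
      α (9*k+2) = 0 ∧ α (9*k+5) = α (3*k+2) ∧ α (9*k+8) = u) ∧
    β 1 = 1 ∧ β 2 = -2 ∧ (∀ k : ℕ, β (k+3) = -1) ∧
    (∀ i : ℕ, 1 ≤ i → β i ≠ 0) := by
  subst hv
  have hp := (Fact.out : p.Prime)
  have h2 : (2 : ZMod p) ≠ 0 := by
    intro h
    have h' : ((2:ℕ) : ZMod p) = 0 := by exact_mod_cast h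
    rw [ZMod.natCast_eq_zero_iff] at h'
    have h2le := Nat.le_of_dvd (by norm_num) h'
    have := hp.two_le
    omega
  have hα2' : α 2 = 0 := by
    rw [hα2, hu]; norm_num
  have hα3' : α 3 = u := by
    rw [hα3, hu, show (-1 : ZMod p) - -3 = 2 by norm_num, div_eq_iff h2]; ring
  have hβ2' : β 2 = -2 := by rw [hβ2, hu]; ring
  have h4 : ((-1:ZMod p) - -3)^2 ≠ 0 := by
    rw [show (-1 : ZMod p) - -3 = 2 by norm_num]
    exact pow_ne_zero 2 h2
  have hβ3' : β 3 = -1 := by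
    rw [hβ3, show u^4 = (u^2)^2 by ring, hu, div_eq_iff h4]
    ring_nf
  have hdneg : ∀ x : ZMod p, x / (-1) = -x := by
    intro x; rw [div_neg, div_one]
  have key : ∀ k : ℕ,
      α (3*k+1) = -u ∧ α (3*k+3) = u - α (3*k+2) ∧
      (α (3*k+2) = 0 ∨ α (3*k+2) = u) ∧
      β (3*k+1) = (if k = 0 then 1 else -1) ∧
      β (3*k+2) = (if k = 0 then -2 else -1) ∧
      β (3*k+3) = -1 ∧
      (∀ m, k = 3*m → α (3*k+2) = 0) ∧
      (∀ m, k = 3*m+1 → α (3*k+2) = α (3*m+2)) ∧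
      (∀ m, k = 3*m+2 → α (3*k+2) = u) := by
    intro k
    induction k using Nat.strong_induction_on with
    | _ k ih =>
      match k with
      | 0 =>
        refine ⟨hα1, by rw [hα2', hα3']; ring, Or.inl hα2', ?_, ?_, hβ3', ?_, ?_, ?_⟩
        · simp [hβ1]
        · simp [hβ2']
        · intro m hm; simpa using hα2'
        · intro m hm; omega
        · intro m hm; omega
      | (j+1) =>
        obtain ⟨Pα1, Pα3, Pα2v, Pβ1, Pβ2, Pβ3, Pc0, Pc1, Pc2⟩ := ih j (by omega)
        -- value of β (j+2)
        have hbj2 : β (j+2) = (if j = 0 then -2 else -1) := by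
          obtain ⟨m, hm⟩ : ∃ m, j = 3*m ∨ j = 3*m+1 ∨ j = 3*m+2 := ⟨j/3, by omega⟩
          rcases hm with hm | hm | hm
          · have h := (ih m (by omega)).2.2.2.2.1
            rw [show j+2 = 3*m+2 by omega, h]
            by_cases hm0 : m = 0 <;> simp [hm0, hm]
          · have h := (ih m (by omega)).2.2.2.2.2.1
            rw [show j+2 = 3*m+3 by omega, h, if_neg (by omega)]
          · have h := (ih (m+1) (by omega)).2.2.2.1
            rw [show j+2 = 3*(m+1)+1 by omega, h, if_neg (by omega), if_neg (by omega)]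
        have hβ4 : β (3*j+4) = -1 := by
          by_cases hj0 : j = 0
          · subst hj0
            have h0 : β (3*0+4) = β 2 / (β 3 * β 2) := hrβ4 0
            rw [h0, hβ2', hβ3', show ((-1:ZMod p) * -2) = 2 by ring, div_eq_iff h2]
            ring
          · rw [hrβ4, hbj2, Pβ3, Pβ2]
            simp only [if_neg hj0]
            norm_num
        have hβ5 : β (3*j+5) = -1 := by
          rw [hrβ5, hβ4, hu]; ring
        have hα5 : α (3*j+5) = α (j+2) + α (3*j+2) := by
          rw [hrα5, hβ4, hβ5, hdneg]; ring
        have hβ6 : α (3*j+5) = 0 ∨ α (3*j+5) = u → β (3*j+6) = -1 := by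
          intro h
          rw [hrβ6, hrα6]
          rcases h with h | h <;> rw [h] <;> ring
        have e1 : 3*(j+1)+1 = 3*j+4 := by ring
        have e2 : 3*(j+1)+2 = 3*j+5 := by ring
        have e3 : 3*(j+1)+3 = 3*j+6 := by ring
        rw [e1, e2, e3]
        obtain ⟨m, hm⟩ : ∃ m, j = 3*m ∨ j = 3*m+1 ∨ j = 3*m+2 := ⟨j/3, by omega⟩
        rcases hm with hm | hm | hm
        · -- j = 3m, k = 3m+1
          have hval : α (3*j+5) = α (3*m+2) := by
            rw [hα5, Pc0 m hm, show j+2 = 3*m+2 by omega]; ring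
          have hmv := (ih m (by omega)).2.2.1
          refine ⟨hrα4 j, hrα6 j, ?_, ?_, ?_, ?_, ?_, ?_, ?_⟩
          · rw [hval]; exact hmv
          · rw [if_neg (by omega)]; exact hβ4
          · rw [if_neg (by omega)]; exact hβ5
          · exact hβ6 (by rw [hval]; exact hmv)
          · intro m' hm'; omega
          · intro m' hm'
            have : m' = m := by omega
            subst this; exact hval
          · intro m' hm'; omega
        · -- j = 3m+1, k = 3m+2
          have hval : α (3*j+5) = u := by
            rw [hα5, Pc1 m hm, show j+2 = 3*m+3 by omega, (ih m (by omega)).2.1]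
            ring
          refine ⟨hrα4 j, hrα6 j, Or.inr hval, ?_, ?_, ?_, ?_, ?_, ?_⟩
          · rw [if_neg (by omega)]; exact hβ4
          · rw [if_neg (by omega)]; exact hβ5
          · exact hβ6 (Or.inr hval)
          · intro m' hm'; omega
          · intro m' hm'; omega
          · intro m' hm'; exact hval
        · -- j = 3m+2, k = 3(m+1)
          have hval : α (3*j+5) = 0 := by
            rw [hα5, Pc2 m hm, show j+2 = 3*m+4 by omega, hrα4 m]; ring
          refine ⟨hrα4 j, hrα6 j, Or.inl hval, ?_, ?_, ?_, ?_, ?_, ?_⟩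
          · rw [if_neg (by omega)]; exact hβ4
          · rw [if_neg (by omega)]; exact hβ5
          · exact hβ6 (Or.inl hval)
          · intro m' hm'; exact hval
          · intro m' hm'; omega
          · intro m' hm'; omega
  have hβlate : ∀ k : ℕ, β (k+3) = -1 := by
    intro k
    obtain ⟨m, hm⟩ : ∃ m, (k+3 = 3*m+1 ∧ 1 ≤ m) ∨ (k+3 = 3*m+2 ∧ 1 ≤ m) ∨ k+3 = 3*m+3 :=
      ⟨(k+2)/3, by omega⟩
    rcases hm with ⟨hm, hm1⟩ | ⟨hm, hm1⟩ | hm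
    · rw [hm, (key m).2.2.2.1, if_neg (by omega)]
    · rw [hm, (key m).2.2.2.2.1, if_neg (by omega)]
    · rw [hm]; exact (key m).2.2.2.2.2.1
  refine ⟨?_, hβ1, hβ2', hβlate, ?_⟩
  · intro k
    refine ⟨(key k).1, by rw [(key k).2.1]; ring, ?_, ?_, ?_⟩
    · rw [show 9*k+2 = 3*(3*k)+2 by ring]
      exact (key (3*k)).2.2.2.2.2.2.1 k rfl
    · rw [show 9*k+5 = 3*(3*k+1)+2 by ring]
      exact (key (3*k+1)).2.2.2.2.2.2.2.1 k rfl
    · rw [show 9*k+8 = 3*(3*k+2)+2 by ring]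
      exact (key (3*k+2)).2.2.2.2.2.2.2.2 k rfl
  · intro i hi
    obtain ⟨m, hm⟩ : ∃ m, i = 1 ∨ i = 2 ∨ i = m+3 := ⟨i-3, by omega⟩
    rcases hm with hm | hm | hm
    · rw [hm, hβ1]; exact one_ne_zero
    · rw [hm, hβ2']
      intro h
      exact h2 (by linear_combination -h)
    · rw [hm, hβlate m]
      intro h
      exact one_ne_zero (α := ZMod p) (by linear_combination -h)
end

section
/- Let p be an odd prime and φ ∈ ℤ/pℤ with φ² + φ + 1 = 0. Set u = φ, v = 0 and define sequences α, β by the Theorem B2 recurrences (α₁ = -u, α₂ = u(2v-1-u²)/(v-u²), α₃ = -u(v-1)/(v-u²), β₁ = 1, β₂ = u²-v, β₃ = (u²+u⁴+v³-3u²v)/(v-u²)², and for k ≥ 0: α_{3k+4} = -u, β_{3k+4} = β_{k+2}/(β_{3k+3}β_{3k+2}), β_{3k+5} = u²-v-β_{3k+4}, α_{3k+5} = u-(α_{k+2}+uv-α_{3k+2}β_{3k+4})/β_{3k+5}, α_{3k+6} = u-α_{3k+5}, β_{3k+6} = v-α_{3k+5}α_{3k+6}). Then for all k ≥ 0: α_{3k+1}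 = -φ, α_{3k+2}+α_{3k+3} = φ, α_{9k+2} = -1, α_{9k+5} = α_{3k+2}, α_{9k+8} = -φ², β₁ = 1, β₂ = φ², β_{3k+3} = -φ², β_{3k+4}+β_{3k+5} = φ², β_{9k+1} = β_{3k+1}, β_{9k+4} = -φ, β_{9k+7} = -1. -/
def ldA (k : ℕ) : ℕ :=
  if h : k % 3 = 1 then ldA (k / 3) else k % 3
termination_by k
decreasing_by exact Nat.div_lt_self (by omega) (by omega)

def ldB (k : ℕ) : ℕ :=
  if h : k ≠ 0 ∧ k % 3 = 0 then ldB (k / 3) else k % 3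
termination_by k
decreasing_by exact Nat.div_lt_self (by omega) (by omega)

lemma ldA_3m (m : ℕ) : ldA (3*m) = 0 := by
  rw [ldA, dif_neg (by omega : ¬ 3*m % 3 = 1)]; omega

lemma ldA_3m1 (m : ℕ) : ldA (3*m+1) = ldA m := by
  rw [ldA, dif_pos (by omega : (3*m+1) % 3 = 1)]; congr 1; omega

lemma ldA_3m2 (m : ℕ) : ldA (3*m+2) = 2 := by
  rw [ldA, dif_neg (by omega : ¬ (3*m+2) % 3 = 1)]; omega

lemma ldA_mem (k : ℕ) : ldA k = 0 ∨ ldA k = 2 := by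
  induction k using Nat.strong_induction_on with
  | _ k ih =>
    rw [ldA]; split_ifs with h
    · exact ih _ (Nat.div_lt_self (by omega) (by omega))
    · omega

lemma ldB_3m (m : ℕ) : ldB (3*m) = ldB m := by
  rcases Nat.eq_zero_or_pos m with rfl | hm
  · norm_num
  · rw [ldB, dif_pos ⟨by omega, by omega⟩]; congr 1; omega

lemma ldB_3m1 (m : ℕ) : ldB (3*m+1) = 1 := by
  rw [ldB, dif_neg (by omega : ¬ ((3*m+1) ≠ 0 ∧ (3*m+1) % 3 = 0))]; omega

lemma ldB_3m2 (m : ℕ) : ldB (3*m+2) = 2 := by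
  rw [ldB, dif_neg (by omega : ¬ ((3*m+2) ≠ 0 ∧ (3*m+2) % 3 = 0))]; omega

lemma ldB_zero : ldB 0 = 0 := by
  rw [ldB, dif_neg (by omega : ¬ ((0:ℕ) ≠ 0 ∧ 0 % 3 = 0))]

lemma ldB_mem : ∀ k : ℕ, k ≠ 0 → ldB k = 1 ∨ ldB k = 2 := by
  intro k
  induction k using Nat.strong_induction_on with
  | _ k ih =>
    intro hk
    rw [ldB]; split_ifs with h
    · exact ih _ (Nat.div_lt_self (by omega) (by omega)) (by omega)
    · omega

def Aval (p : ℕ) (φ : ZMod p) (k : ℕ) : ZMod p :=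
  if ldA k = 2 then -φ^2 else -1

def Bval (p : ℕ) (φ : ZMod p) (k : ℕ) : ZMod p :=
  if ldB k = 1 then -φ else if ldB k = 2 then -1 else 1

def B2v (p : ℕ) (φ : ZMod p) (k : ℕ) : ZMod p :=
  if k = 0 then φ^2 else φ^2 - Bval p φ k

lemma Aval_3m (p : ℕ) (φ : ZMod p) (m : ℕ) : Aval p φ (3*m) = -1 := by
  simp [Aval, ldA_3m]

lemma Aval_3m1 (p : ℕ) (φ : ZMod p) (m : ℕ) : Aval p φ (3*m+1) = Aval p φ m := by
  simp [Aval, ldA_3m1]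

lemma Aval_3m2 (p : ℕ) (φ : ZMod p) (m : ℕ) : Aval p φ (3*m+2) = -φ^2 := by
  simp [Aval, ldA_3m2]

lemma Aval_mem (p : ℕ) (φ : ZMod p) (k : ℕ) :
    Aval p φ k = -1 ∨ Aval p φ k = -φ^2 := by
  unfold Aval; rcases ldA_mem k with h | h <;> simp [h]

lemma Bval_3m (p : ℕ) (φ : ZMod p) (m : ℕ) : Bval p φ (3*m) = Bval p φ m := by
  simp [Bval, ldB_3m]

lemma Bval_3m1 (p : ℕ) (φ : ZMod p) (m : ℕ) : Bval p φ (3*m+1) = -φ := by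
  simp [Bval, ldB_3m1]

lemma Bval_3m2 (p : ℕ) (φ : ZMod p) (m : ℕ) : Bval p φ (3*m+2) = -1 := by
  simp [Bval, ldB_3m2]

lemma Bval_mem (p : ℕ) (φ : ZMod p) (k : ℕ) (hk : k ≠ 0) :
    Bval p φ k = -φ ∨ Bval p φ k = -1 := by
  unfold Bval; rcases ldB_mem k hk with h | h <;> simp [h]

lemma B2v_3m (p : ℕ) (φ : ZMod p) (m : ℕ) : B2v p φ (3*m) = B2v p φ m := by
  rcases Nat.eq_zero_or_pos m with rfl | hm
  · norm_num
  · simp only [B2v]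
    rw [if_neg (by omega : ¬ 3*m = 0), if_neg (by omega : ¬ m = 0), Bval_3m]

lemma B2v_succ (p : ℕ) (φ : ZMod p) (n : ℕ) :
    B2v p φ (n+1) = φ^2 - Bval p φ (n+1) := by
  simp [B2v]

lemma sub_div_helper {K : Type*} [Field K] {x n d t : K} (hd : d ≠ 0)
    (h : n = (x - t) * d) : x - n / d = t := by
  subst h; rw [mul_div_assoc, div_self hd, mul_one]; ring

theorem stmt2 (p : ℕ) [Fact p.Prime] (hodd : p ≠ 2)
    (φ : ZMod p) (hφ : φ^2 + φ + 1 = 0)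
    (u v : ZMod p) (hu : u = φ) (hv : v = 0)
    (α β : ℕ → ZMod p)
    (hα1 : α 1 = -u) (hα2 : α 2 = u * (2*v - 1 - u^2) / (v - u^2))
    (hα3 : α 3 = -u * (v - 1) / (v - u^2))
    (hβ1 : β 1 = 1) (hβ2 : β 2 = u^2 - v)
    (hβ3 : β 3 = (u^2 + u^4 + v^3 - 3*u^2*v) / (v - u^2)^2)
    (hrα4 : ∀ k : ℕ, α (3*k+4) = -u)
    (hrβ4 : ∀ k : ℕ, β (3*k+4) = β (k+2) / (β (3*k+3) * β (3*k+2)))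
    (hrβ5 : ∀ k : ℕ, β (3*k+5) = u^2 - v - β (3*k+4))
    (hrα5 : ∀ k : ℕ, α (3*k+5) = u - (α (k+2) + u*v - α (3*k+2) * β (3*k+4)) / β (3*k+5))
    (hrα6 : ∀ k : ℕ, α (3*k+6) = u - α (3*k+5))
    (hrβ6 : ∀ k : ℕ, β (3*k+6) = v - α (3*k+5) * α (3*k+6)) :
    (∀ k : ℕ, α (3*k+1) = -φ ∧ α (3*k+2) + α (3*k+3) = φ ∧
      α (9*k+2) = -1 ∧ α (9*k+5) = α (3*k+2) ∧ α (9*k+8) = -φ^2) ∧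
    β 1 = 1 ∧ β 2 = φ^2 ∧
    (∀ k : ℕ, β (3*k+3) = -φ^2 ∧ β (3*k+4) + β (3*k+5) = φ^2 ∧
      β (9*k+1) = β (3*k+1) ∧ β (9*k+4) = -φ ∧ β (9*k+7) = -1) := by
  subst v
  subst u
  have h10 : (1 : ZMod p) ≠ 0 := one_ne_zero
  have hm1 : (-1 : ZMod p) ≠ 0 := neg_ne_zero.mpr h10
  have hφ0 : φ ≠ 0 := by
    intro h; rw [h] at hφ; simp at hφ
  have hφ20 : φ^2 ≠ 0 := pow_ne_zero _ hφ0
  have hmφ20 : (-φ^2 : ZMod p) ≠ 0 := neg_ne_zero.mpr hφ20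
  have hmφ0 : (-φ : ZMod p) ≠ 0 := neg_ne_zero.mpr hφ0
  have hφ3 : φ^3 = 1 := by linear_combination (φ - 1) * hφ
  have hB2ne : ∀ m : ℕ, B2v p φ m ≠ 0 := by
    intro m
    by_cases hm : m = 0
    · simp [B2v, hm, hφ20]
    · obtain ⟨n, rfl⟩ : ∃ n, m = n + 1 := ⟨m - 1, by omega⟩
      rw [B2v_succ]
      rcases Bval_mem p φ (n+1) (by omega) with h | h <;> rw [h]
      · rw [show (φ^2 - -φ : ZMod p) = -1 by linear_combination hφ]; exact hm1
      · rw [show (φ^2 - -1 : ZMod p) = -φ by linear_combination hφ]; exact hmφ0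
  have hB2v1 : ∀ m : ℕ, B2v p φ (3*m+1) = -1 := by
    intro m
    rw [B2v_succ, Bval_3m1]; linear_combination hφ
  have hB2v2 : ∀ m : ℕ, B2v p φ (3*m+2) = -φ := by
    intro m
    rw [show 3*m+2 = (3*m+1)+1 by omega, B2v_succ,
      show (3*m+1)+1 = 3*m+2 by omega, Bval_3m2]
    linear_combination hφ
  -- main invariant
  have main : ∀ k : ℕ, α (3*k+1) = -φ ∧ α (3*k+2) = Aval p φ k ∧
      α (3*k+3) = φ - Aval p φ k ∧ β (3*k+1) = Bval p φ k ∧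
      β (3*k+2) = B2v p φ k ∧ β (3*k+3) = -φ^2 := by
    intro k
    induction k using Nat.strong_induction_on with
    | _ k ih =>
      rcases eq_or_ne k 0 with rfl | hk0
      · refine ⟨?_, ?_, ?_, ?_, ?_, ?_⟩
        · rw [show 3*0+1 = 1 by norm_num]; exact hα1
        · rw [show 3*0+2 = 2 by norm_num, hα2,
            show Aval p φ 0 = -1 by simpa using Aval_3m p φ 0,
            div_eq_iff (show (0 - φ^2 : ZMod p) ≠ 0 by simpa using hφ20)]
          linear_combination (-φ) * hφ
        · rw [show 3*0+3 = 3 by norm_num, hα3,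
            show Aval p φ 0 = -1 by simpa using Aval_3m p φ 0,
            div_eq_iff (show (0 - φ^2 : ZMod p) ≠ 0 by simpa using hφ20)]
          linear_combination φ * hφ
        · rw [show 3*0+1 = 1 by norm_num, hβ1,
            show Bval p φ 0 = 1 by simp [Bval, ldB_zero]]
        · rw [show 3*0+2 = 2 by norm_num, hβ2, show B2v p φ 0 = φ^2 by simp [B2v]]
          ring
        · rw [show 3*0+3 = 3 by norm_num, hβ3,
            div_eq_iff (show ((0 - φ^2)^2 : ZMod p) ≠ 0 by
              apply pow_ne_zero; simpa using hφ20)]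
          linear_combination (φ^2 * (φ^2 - φ + 1)) * hφ
      · obtain ⟨j, rfl⟩ : ∃ j, k = j + 1 := ⟨k - 1, by omega⟩
        obtain ⟨ha1, ha2, ha3, hb1, hb2, hb3⟩ := ih j (by omega)
        have h3 : j % 3 = 0 ∨ j % 3 = 1 ∨ j % 3 = 2 := by omega
        -- key block facts
        have H4b : β (3*j+4) = Bval p φ (j+1) := by
          rcases h3 with h | h | h
          · obtain ⟨m, hj⟩ : ∃ m, j = 3*m := ⟨j/3, by omega⟩
            have hm := ih m (by omega)
            rw [hrβ4 j, hb3, hb2, show j+2 = 3*m+2 by omega, hm.2.2.2.2.1, hj,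
              B2v_3m, Bval_3m1,
              div_eq_iff (mul_ne_zero hmφ20 (hB2ne m))]
            linear_combination (-(B2v p φ m)) * hφ3
          · obtain ⟨m, hj⟩ : ∃ m, j = 3*m+1 := ⟨j/3, by omega⟩
            have hm := ih m (by omega)
            rw [hrβ4 j, hb3, hb2, show j+2 = 3*m+3 by omega, hm.2.2.2.2.2, hj,
              hB2v1, show 3*m+1+1 = 3*m+2 by omega, Bval_3m2,
              div_eq_iff (mul_ne_zero hmφ20 hm1)]
            ring
          · obtain ⟨m, hj⟩ : ∃ m, j = 3*m+2 := ⟨j/3, by omega⟩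
            have hm := ih (m+1) (by omega)
            rw [hrβ4 j, hb3, hb2, show j+2 = 3*(m+1)+1 by omega, hm.2.2.2.1, hj,
              hB2v2, show 3*m+2+1 = 3*(m+1) by omega, Bval_3m,
              show (-φ^2 * -φ : ZMod p) = 1 by linear_combination hφ3, div_one]
        have H5b : β (3*j+5) = B2v p φ (j+1) := by
          rw [hrβ5 j, H4b, B2v_succ]; ring
        have H5a : α (3*j+5) = Aval p φ (j+1) := by
          rcases h3 with h | h | h
          · obtain ⟨m, hj⟩ : ∃ m, j = 3*m := ⟨j/3, by omega⟩
            have hm := ih m (by omega)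
            rw [hrα5 j, show j+2 = 3*m+2 by omega, hm.2.1, ha2, H4b, H5b, hj,
              Aval_3m, Bval_3m1, hB2v1, Aval_3m1]
            apply sub_div_helper hm1
            ring
          · obtain ⟨m, hj⟩ : ∃ m, j = 3*m+1 := ⟨j/3, by omega⟩
            have hm := ih m (by omega)
            rw [hrα5 j, show j+2 = 3*m+3 by omega, hm.2.2.1, ha2, H4b, H5b, hj,
              Aval_3m1, show 3*m+1+1 = 3*m+2 by omega, Bval_3m2, hB2v2, Aval_3m2]
            apply sub_div_helper hmφ0
            linear_combination φ * hφ
          · obtain ⟨m, hj⟩ : ∃ m, j = 3*m+2 := ⟨j/3, by omega⟩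
            rw [hrα5 j, show j+2 = 3*m+4 by omega, hrα4 m, ha2, H4b, H5b, hj,
              Aval_3m2, show 3*m+2+1 = 3*(m+1) by omega, Bval_3m, B2v_3m,
              Aval_3m, B2v_succ]
            rcases Bval_mem p φ (m+1) (by omega) with hb | hb <;> rw [hb]
            · rw [show (φ^2 - -φ : ZMod p) = -1 by linear_combination hφ]
              apply sub_div_helper hm1
              linear_combination (-1 : ZMod p) * hφ3
            · rw [show (φ^2 - -1 : ZMod p) = -φ by linear_combination hφ]
              apply sub_div_helper hmφ0
              ring
        have H6a : α (3*j+6) = φ - Aval p φ (j+1) := by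
          rw [hrα6 j, H5a]
        have H6b : β (3*j+6) = -φ^2 := by
          rw [hrβ6 j, H5a, H6a]
          rcases Aval_mem p φ (j+1) with h | h <;> rw [h]
          · linear_combination hφ
          · linear_combination (φ^2) * hφ
        refine ⟨?_, ?_, ?_, ?_, ?_, ?_⟩
        · rw [show 3*(j+1)+1 = 3*j+4 by ring]; exact hrα4 j
        · rw [show 3*(j+1)+2 = 3*j+5 by ring]; exact H5a
        · rw [show 3*(j+1)+3 = 3*j+6 by ring]; exact H6a
        · rw [show 3*(j+1)+1 = 3*j+4 by ring]; exact H4b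
        · rw [show 3*(j+1)+2 = 3*j+5 by ring]; exact H5b
        · rw [show 3*(j+1)+3 = 3*j+6 by ring]; exact H6b
  refine ⟨fun k => ⟨(main k).1, ?_, ?_, ?_, ?_⟩, hβ1, ?_, fun k => ⟨(main k).2.2.2.2.2, ?_, ?_, ?_, ?_⟩⟩
  · rw [(main k).2.1, (main k).2.2.1]; ring
  · rw [show 9*k+2 = 3*(3*k)+2 by ring, (main (3*k)).2.1, Aval_3m]
  · rw [show 9*k+5 = 3*(3*k+1)+2 by ring, (main (3*k+1)).2.1, Aval_3m1, (main k).2.1]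
  · rw [show 9*k+8 = 3*(3*k+2)+2 by ring, (main (3*k+2)).2.1, Aval_3m2]
  · rw [hβ2]; ring
  · rw [hrβ5 k]; ring
  · rw [show 9*k+1 = 3*(3*k)+1 by ring, (main (3*k)).2.2.2.1, Bval_3m, (main k).2.2.2.1]
  · rw [show 9*k+4 = 3*(3*k+1)+1 by ring, (main (3*k+1)).2.2.2.1, Bval_3m1]
  · rw [show 9*k+7 = 3*(3*k+2)+1 by ring, (main (3*k+2)).2.2.2.1, Bval_3m2]
end

section
/- Let p be an odd prime and φ ∈ ℤ/pℤ with φ⁴ + 4φ² + 1 = 0. Set u = φ, v = -1 and define α, β by the Theorem B2 recurrences. Then for all k ≥ 0: α_{3k+1} = -φ, α_{3k+2}+α_{3k+3} = φ, α_{9k+2} = -φ⁻¹, α_{9k+5} = α_{3k+3}, α_{9k+8} = φ + φ⁻¹, β₁ = 1, β₂ = φ²+1, β_{3k+3} = φ⁻², β_{3k+4}+β_{3k+5} = φ²+1, β_{9k+1} = β_{3k+1}, β_{9k+4} = φ², β_{9k+7} = 1. In particular, β_i ≠ 0 for all i. -/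
/-!
Write `c = φ²`. The sequences have a closed form governed by the ternary digits of `m`:
`α (3m+1) = -φ`, `β (3m+3) = c⁻¹`; `β (3m+1)` and `β (3m+2)` take the values `1, c+1`
(at `m = 0`), `c, 1` or `1, c` according as the lowest nonzero digit of `m` is absent, `1` or `2`;
and `α (3m+2)`, `α (3m+3) = φ - α (3m+2)` lie in `{-φ⁻¹, φ + φ⁻¹}`, swapped by each trailing
digit `1` of `m`. The closed form is proved by strong induction on `m`, splitting on `m mod 3`:
every step of the recurrence then becomes an identity that is trivial or equivalent to
`c² + 4c + 1 = 0`. All the values `1, c, c + 1, c⁻¹` taken by `β` are nonzero, `c + 1` because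
`(c + 1)² = -2c`.
-/

section TernaryDigits

variable {M X : Type*}

/-- `a` or `u - a`: each trailing ternary digit `1` of `m` applies the flip `x ↦ u - x`, and the
digit above them decides the starting value (`a` for `0`, `u - a` for `2`). -/
def ternaryFlip [Sub M] (u a : M) (m : ℕ) : M :=
  if m % 3 = 1 then u - ternaryFlip u a (m / 3) else if m % 3 = 2 then u - a else a

/-- `x_d`, where `d` is the lowest nonzero ternary digit of `m` (and `d = 0` for `m = 0`). -/
def byLowTernaryDigit (x₀ x₁ x₂ : X) (m : ℕ) : X :=
  if m = 0 then x₀ else if m % 3 = 1 then x₁ else if m % 3 = 2 then x₂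
  else byLowTernaryDigit x₀ x₁ x₂ (m / 3)

section Flip

variable [Sub M] (u a : M) (q : ℕ)

theorem ternaryFlip_three_mul : ternaryFlip u a (3 * q) = a := by
  rw [ternaryFlip, if_neg (by omega), if_neg (by omega)]

theorem ternaryFlip_three_mul_add_one :
    ternaryFlip u a (3 * q + 1) = u - ternaryFlip u a q := by
  rw [ternaryFlip, if_pos (by omega), show (3 * q + 1) / 3 = q by omega]

theorem ternaryFlip_three_mul_add_two : ternaryFlip u a (3 * q + 2) = u - a := by
  rw [ternaryFlip, if_neg (by omega), if_pos (by omega)]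

end Flip

theorem ternaryFlip_eq_or [AddCommGroup M] (u a : M) (m : ℕ) :
    ternaryFlip u a m = a ∨ ternaryFlip u a m = u - a := by
  induction m using Nat.strong_induction_on with
  | _ m ih =>
    obtain ⟨q, rfl | rfl | rfl⟩ : ∃ q, m = 3 * q ∨ m = 3 * q + 1 ∨ m = 3 * q + 2 :=
      ⟨m / 3, by omega⟩
    · exact .inl (ternaryFlip_three_mul u a q)
    · rw [ternaryFlip_three_mul_add_one]
      rcases ih q (by omega) with h | h <;> rw [h] <;> simp
    · exact .inr (ternaryFlip_three_mul_add_two u a q)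

section LowDigit

variable (x₀ x₁ x₂ : X) (q : ℕ)

theorem byLowTernaryDigit_zero : byLowTernaryDigit x₀ x₁ x₂ 0 = x₀ := by
  rw [byLowTernaryDigit, if_pos rfl]

theorem byLowTernaryDigit_three_mul :
    byLowTernaryDigit x₀ x₁ x₂ (3 * q) = byLowTernaryDigit x₀ x₁ x₂ q := by
  rcases Nat.eq_zero_or_pos q with rfl | hq
  · rfl
  · rw [byLowTernaryDigit, if_neg (by omega), if_neg (by omega), if_neg (by omega),
      Nat.mul_div_cancel_left q (by norm_num)]

theorem byLowTernaryDigit_three_mul_add_one :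
    byLowTernaryDigit x₀ x₁ x₂ (3 * q + 1) = x₁ := by
  rw [byLowTernaryDigit, if_neg (by omega), if_pos (by omega)]

theorem byLowTernaryDigit_three_mul_add_two :
    byLowTernaryDigit x₀ x₁ x₂ (3 * q + 2) = x₂ := by
  rw [byLowTernaryDigit, if_neg (by omega), if_neg (by omega), if_pos (by omega)]

theorem byLowTernaryDigit_eq_or (m : ℕ) :
    byLowTernaryDigit x₀ x₁ x₂ m = x₀ ∨ byLowTernaryDigit x₀ x₁ x₂ m = x₁ ∨
      byLowTernaryDigit x₀ x₁ x₂ m = x₂ := by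
  induction m using Nat.strong_induction_on with
  | _ m ih =>
    obtain ⟨q, rfl | rfl | rfl⟩ : ∃ q, m = 3 * q ∨ m = 3 * q + 1 ∨ m = 3 * q + 2 :=
      ⟨m / 3, by omega⟩
    · rcases Nat.eq_zero_or_pos q with rfl | hq
      · exact .inl (byLowTernaryDigit_zero x₀ x₁ x₂)
      · rw [byLowTernaryDigit_three_mul]; exact ih q (by omega)
    · exact .inr (.inl (byLowTernaryDigit_three_mul_add_one x₀ x₁ x₂ q))
    · exact .inr (.inr (byLowTernaryDigit_three_mul_add_two x₀ x₁ x₂ q))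

end LowDigit

theorem byLowTernaryDigit_ne_zero [Zero X] {x₀ x₁ x₂ : X} (h₀ : x₀ ≠ 0) (h₁ : x₁ ≠ 0)
    (h₂ : x₂ ≠ 0) (m : ℕ) : byLowTernaryDigit x₀ x₁ x₂ m ≠ 0 := by
  rcases byLowTernaryDigit_eq_or x₀ x₁ x₂ m with h | h | h <;> rw [h] <;> assumption

end TernaryDigits

section Quartic

variable {R : Type*} [CommRing R] {u : R}

theorem ne_zero_of_quartic [Nontrivial R] (hu : u^4 + 4*u^2 + 1 = 0) : u ≠ 0 := by
  rintro rfl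
  norm_num at hu

theorem sq_add_one_ne_zero_of_quartic (h2 : (2 : R) ≠ 0) (hu : u^4 + 4*u^2 + 1 = 0) :
    u^2 + 1 ≠ 0 := by
  intro h
  exact h2 (by linear_combination (u^2 + 3) * h - hu)

end Quartic

structure B2Recurrence {K : Type*} [Field K] (u v : K) (α β : ℕ → K) : Prop where
  alpha_one : α 1 = -u
  alpha_two : α 2 = u * (2*v - 1 - u^2) / (v - u^2)
  alpha_three : α 3 = -u * (v - 1) / (v - u^2)
  beta_one : β 1 = 1
  beta_two : β 2 = u^2 - v
  beta_three : β 3 = (u^2 + u^4 + v^3 - 3*u^2*v) / (v - u^2)^2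
  alpha_three_mul_add_four : ∀ k : ℕ, α (3*k+4) = -u
  beta_three_mul_add_four : ∀ k : ℕ, β (3*k+4) = β (k+2) / (β (3*k+3) * β (3*k+2))
  beta_three_mul_add_five : ∀ k : ℕ, β (3*k+5) = u^2 - v - β (3*k+4)
  alpha_three_mul_add_five : ∀ k : ℕ,
    α (3*k+5) = u - (α (k+2) + u*v - α (3*k+2) * β (3*k+4)) / β (3*k+5)
  alpha_three_mul_add_six : ∀ k : ℕ, α (3*k+6) = u - α (3*k+5)
  beta_three_mul_add_six : ∀ k : ℕ, β (3*k+6) = v - α (3*k+5) * α (3*k+6)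

namespace B2Recurrence

structure ClosedFormAt {K : Type*} [Field K] (u : K) (α β : ℕ → K) (m : ℕ) : Prop where
  α₁ : α (3*m+1) = -u
  α₂ : α (3*m+2) = ternaryFlip u (-u⁻¹) m
  α₃ : α (3*m+3) = u - ternaryFlip u (-u⁻¹) m
  β₁ : β (3*m+1) = byLowTernaryDigit 1 (u^2) 1 m
  β₂ : β (3*m+2) = byLowTernaryDigit (u^2+1) 1 (u^2) m
  β₃ : β (3*m+3) = (u^2)⁻¹

variable {K : Type*} [Field K] {u : K} {α β : ℕ → K}

theorem closedFormAt_zero (h : B2Recurrence u (-1) α β) (hu : u^4 + 4*u^2 + 1 = 0)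
    (hu1 : u^2 + 1 ≠ 0) : ClosedFormAt u α β 0 := by
  have hu0 := ne_zero_of_quartic hu
  have hd : (-1 : K) - u^2 ≠ 0 := by
    intro hd; exact hu1 (by linear_combination -hd)
  refine ⟨h.alpha_one, ?_, ?_, ?_, ?_, ?_⟩
  · rw [h.alpha_two, ternaryFlip_three_mul u _ 0, div_eq_iff hd]
    field_simp
    linear_combination -hu
  · rw [h.alpha_three, ternaryFlip_three_mul u _ 0, div_eq_iff hd]
    field_simp
    linear_combination hu
  · rw [h.beta_one, byLowTernaryDigit_zero]
  · rw [h.beta_two, byLowTernaryDigit_zero]; ring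
  · rw [h.beta_three, div_eq_iff (pow_ne_zero _ hd)]
    field_simp
    linear_combination (u^2 - 1) * hu

theorem closedFormAt_succ (h : B2Recurrence u (-1) α β) (hu0 : u ≠ 0) {k : ℕ}
    (hβ₄ : β (3*k+4) = byLowTernaryDigit 1 (u^2) 1 (k+1))
    (hβ₅ : β (3*k+5) = byLowTernaryDigit (u^2+1) 1 (u^2) (k+1))
    (hα₅ : α (3*k+5) = ternaryFlip u (-u⁻¹) (k+1)) : ClosedFormAt u α β (k+1) := by
  have hα₆ : α (3*k+6) = u - ternaryFlip u (-u⁻¹) (k+1) := by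
    rw [h.alpha_three_mul_add_six, hα₅]
  refine ⟨h.alpha_three_mul_add_four k, hα₅, hα₆, hβ₄, hβ₅, ?_⟩
  show β (3*k+6) = _
  rw [h.beta_three_mul_add_six, hα₅, hα₆]
  rcases ternaryFlip_eq_or u (-u⁻¹) (k+1) with hf | hf <;> rw [hf] <;> field_simp <;> ring

theorem closedFormAt_three_mul_add_one (h : B2Recurrence u (-1) α β) (hu0 : u ≠ 0)
    (hu1 : u^2 + 1 ≠ 0) {q : ℕ} (hq : ClosedFormAt u α β q)
    (h3q : ClosedFormAt u α β (3*q)) : ClosedFormAt u α β (3*q+1) := by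
  have hH : byLowTernaryDigit (u^2+1) 1 (u^2) q ≠ 0 :=
    byLowTernaryDigit_ne_zero hu1 one_ne_zero (pow_ne_zero 2 hu0) q
  have hβ₄ : β (3*(3*q)+4) = u^2 := by
    rw [h.beta_three_mul_add_four, hq.β₂, h3q.β₃, h3q.β₂, byLowTernaryDigit_three_mul]
    field_simp
  have hβ₅ : β (3*(3*q)+5) = 1 := by
    rw [h.beta_three_mul_add_five, hβ₄]; ring
  refine closedFormAt_succ h hu0 ?_ ?_ ?_
  · rw [hβ₄, byLowTernaryDigit_three_mul_add_one]
  · rw [hβ₅, byLowTernaryDigit_three_mul_add_one]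
  · rw [h.alpha_three_mul_add_five, hq.α₂, h3q.α₂, hβ₄, hβ₅, ternaryFlip_three_mul,
      ternaryFlip_three_mul_add_one]
    field_simp
    ring

theorem closedFormAt_three_mul_add_two (h : B2Recurrence u (-1) α β) (hu0 : u ≠ 0)
    {q : ℕ} (hq : ClosedFormAt u α β q)
    (h3q : ClosedFormAt u α β (3*q+1)) : ClosedFormAt u α β (3*q+2) := by
  have hβ₂ : β (3*(3*q+1)+2) = 1 := by
    rw [h3q.β₂, byLowTernaryDigit_three_mul_add_one]
  have hβ₄ : β (3*(3*q+1)+4) = 1 := by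
    rw [h.beta_three_mul_add_four, show 3*q+1+2 = 3*q+3 from rfl, hq.β₃, h3q.β₃, hβ₂]
    field_simp
  have hβ₅ : β (3*(3*q+1)+5) = u^2 := by
    rw [h.beta_three_mul_add_five, hβ₄]; ring
  refine closedFormAt_succ h hu0 ?_ ?_ ?_
  · rw [hβ₄, byLowTernaryDigit_three_mul_add_two]
  · rw [hβ₅, byLowTernaryDigit_three_mul_add_two]
  · rw [h.alpha_three_mul_add_five, show 3*q+1+2 = 3*q+3 from rfl, hq.α₃, h3q.α₂, hβ₄, hβ₅,
      ternaryFlip_three_mul_add_one, ternaryFlip_three_mul_add_two]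
    field_simp
    ring

theorem closedFormAt_three_mul_add_three (h : B2Recurrence u (-1) α β)
    (hu : u^4 + 4*u^2 + 1 = 0) (hu1 : u^2 + 1 ≠ 0) {q : ℕ}
    (hq : ClosedFormAt u α β (q+1))
    (h3q : ClosedFormAt u α β (3*q+2)) : ClosedFormAt u α β (3*q+3) := by
  have hu0 := ne_zero_of_quartic hu
  have hH : byLowTernaryDigit (u^2+1) 1 (u^2) (q+1) =
      u^2 + 1 - byLowTernaryDigit 1 (u^2) 1 (q+1) := by
    have hβ₅ : β (3*(q+1)+2) = u^2 - -1 - β (3*(q+1)+1) := h.beta_three_mul_add_five q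
    rw [← hq.β₂, ← hq.β₁, hβ₅]; ring
  have hβ₄ : β (3*(3*q+2)+4) = byLowTernaryDigit 1 (u^2) 1 (q+1) := by
    rw [h.beta_three_mul_add_four, show 3*q+2+2 = 3*(q+1)+1 from rfl, hq.β₁, h3q.β₃, h3q.β₂,
      byLowTernaryDigit_three_mul_add_two]
    field_simp
  have hβ₅ : β (3*(3*q+2)+5) = byLowTernaryDigit (u^2+1) 1 (u^2) (q+1) := by
    rw [h.beta_three_mul_add_five, hβ₄, hH]; ring
  have hH0 : byLowTernaryDigit (u^2+1) 1 (u^2) (q+1) ≠ 0 :=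
    byLowTernaryDigit_ne_zero hu1 one_ne_zero (pow_ne_zero 2 hu0) (q+1)
  refine closedFormAt_succ h hu0 ?_ ?_ ?_
  · rw [hβ₄, show 3*q+2+1 = 3*(q+1) from rfl, byLowTernaryDigit_three_mul]
  · rw [hβ₅, show 3*q+2+1 = 3*(q+1) from rfl, byLowTernaryDigit_three_mul]
  · rw [h.alpha_three_mul_add_five, h.alpha_three_mul_add_four, h3q.α₂, hβ₄, hβ₅,
      ternaryFlip_three_mul_add_two, show 3*q+2+1 = 3*(q+1) from rfl, ternaryFlip_three_mul]
    field_simp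
    linear_combination hu + (u^2 + 1) * hH

theorem closedFormAt (h : B2Recurrence u (-1) α β) (hu : u^4 + 4*u^2 + 1 = 0)
    (hu1 : u^2 + 1 ≠ 0) (m : ℕ) : ClosedFormAt u α β m := by
  have hu0 := ne_zero_of_quartic hu
  induction m using Nat.strong_induction_on with
  | _ m ih =>
    obtain rfl | ⟨q, rfl | rfl | rfl⟩ :
        m = 0 ∨ ∃ q, m = 3*q+1 ∨ m = 3*q+2 ∨ m = 3*q+3 := by
      rcases m with _ | m
      · exact .inl rfl
      · exact .inr ⟨m / 3, by omega⟩
    · exact closedFormAt_zero h hu hu1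
    · exact closedFormAt_three_mul_add_one h hu0 hu1 (ih q (by omega)) (ih (3*q) (by omega))
    · exact closedFormAt_three_mul_add_two h hu0 (ih q (by omega)) (ih (3*q+1) (by omega))
    · exact closedFormAt_three_mul_add_three h hu hu1 (ih (q+1) (by omega))
        (ih (3*q+2) (by omega))

theorem alpha_pattern (h : B2Recurrence u (-1) α β) (hu : u^4 + 4*u^2 + 1 = 0)
    (hu1 : u^2 + 1 ≠ 0) (k : ℕ) :
    α (3*k+1) = -u ∧ α (3*k+2) + α (3*k+3) = u ∧
      α (9*k+2) = -u⁻¹ ∧ α (9*k+5) = α (3*k+3) ∧ α (9*k+8) = u + u⁻¹ := by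
  have hk := closedFormAt h hu hu1 k
  refine ⟨hk.α₁, by rw [hk.α₂, hk.α₃]; ring, ?_, ?_, ?_⟩
  · rw [show 9*k+2 = 3*(3*k)+2 by ring, (closedFormAt h hu hu1 (3*k)).α₂,
      ternaryFlip_three_mul]
  · rw [show 9*k+5 = 3*(3*k+1)+2 by ring, (closedFormAt h hu hu1 (3*k+1)).α₂,
      ternaryFlip_three_mul_add_one, hk.α₃]
  · rw [show 9*k+8 = 3*(3*k+2)+2 by ring, (closedFormAt h hu hu1 (3*k+2)).α₂,
      ternaryFlip_three_mul_add_two]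
    ring

theorem beta_pattern (h : B2Recurrence u (-1) α β) (hu : u^4 + 4*u^2 + 1 = 0)
    (hu1 : u^2 + 1 ≠ 0) (k : ℕ) :
    β (3*k+3) = (u^2)⁻¹ ∧ β (3*k+4) + β (3*k+5) = u^2 + 1 ∧
      β (9*k+1) = β (3*k+1) ∧ β (9*k+4) = u^2 ∧ β (9*k+7) = 1 := by
  have hk := closedFormAt h hu hu1 k
  refine ⟨hk.β₃, by rw [h.beta_three_mul_add_five]; ring, ?_, ?_, ?_⟩
  · rw [show 9*k+1 = 3*(3*k)+1 by ring, (closedFormAt h hu hu1 (3*k)).β₁,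
      byLowTernaryDigit_three_mul, hk.β₁]
  · rw [show 9*k+4 = 3*(3*k+1)+1 by ring, (closedFormAt h hu hu1 (3*k+1)).β₁,
      byLowTernaryDigit_three_mul_add_one]
  · rw [show 9*k+7 = 3*(3*k+2)+1 by ring, (closedFormAt h hu hu1 (3*k+2)).β₁,
      byLowTernaryDigit_three_mul_add_two]

theorem beta_ne_zero (h : B2Recurrence u (-1) α β) (hu : u^4 + 4*u^2 + 1 = 0)
    (hu1 : u^2 + 1 ≠ 0) {i : ℕ} (hi : 1 ≤ i) : β i ≠ 0 := by
  have hc : u^2 ≠ 0 := pow_ne_zero 2 (ne_zero_of_quartic hu)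
  obtain ⟨m, rfl | rfl | rfl⟩ : ∃ m, i = 3*m+1 ∨ i = 3*m+2 ∨ i = 3*m+3 :=
    ⟨(i - 1) / 3, by omega⟩
  · rw [(closedFormAt h hu hu1 m).β₁]
    exact byLowTernaryDigit_ne_zero one_ne_zero hc one_ne_zero m
  · rw [(closedFormAt h hu hu1 m).β₂]
    exact byLowTernaryDigit_ne_zero hu1 one_ne_zero hc m
  · rw [(closedFormAt h hu hu1 m).β₃]
    exact inv_ne_zero hc

end B2Recurrence

theorem stmt3 (p : ℕ) [Fact p.Prime] (hodd : p ≠ 2)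
    (φ : ZMod p) (hφ : φ^4 + 4*φ^2 + 1 = 0)
    (u v : ZMod p) (hu : u = φ) (hv : v = -1)
    (α β : ℕ → ZMod p)
    (hα1 : α 1 = -u) (hα2 : α 2 = u * (2*v - 1 - u^2) / (v - u^2))
    (hα3 : α 3 = -u * (v - 1) / (v - u^2))
    (hβ1 : β 1 = 1) (hβ2 : β 2 = u^2 - v)
    (hβ3 : β 3 = (u^2 + u^4 + v^3 - 3*u^2*v) / (v - u^2)^2)
    (hrα4 : ∀ k : ℕ, α (3*k+4) = -u)
    (hrβ4 : ∀ k : ℕ, β (3*k+4) = β (k+2) / (β (3*k+3) * β (3*k+2)))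
    (hrβ5 : ∀ k : ℕ, β (3*k+5) = u^2 - v - β (3*k+4))
    (hrα5 : ∀ k : ℕ, α (3*k+5) = u - (α (k+2) + u*v - α (3*k+2) * β (3*k+4)) / β (3*k+5))
    (hrα6 : ∀ k : ℕ, α (3*k+6) = u - α (3*k+5))
    (hrβ6 : ∀ k : ℕ, β (3*k+6) = v - α (3*k+5) * α (3*k+6)) :
    (∀ k : ℕ, α (3*k+1) = -φ ∧ α (3*k+2) + α (3*k+3) = φ ∧
      α (9*k+2) = -φ⁻¹ ∧ α (9*k+5) = α (3*k+3) ∧ α (9*k+8) = φ + φ⁻¹) ∧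
    β 1 = 1 ∧ β 2 = φ^2 + 1 ∧
    (∀ k : ℕ, β (3*k+3) = (φ^2)⁻¹ ∧ β (3*k+4) + β (3*k+5) = φ^2 + 1 ∧
      β (9*k+1) = β (3*k+1) ∧ β (9*k+4) = φ^2 ∧ β (9*k+7) = 1) ∧
    (∀ i : ℕ, 1 ≤ i → β i ≠ 0) := by
  subst hu hv
  have h : B2Recurrence u (-1) α β :=
    ⟨hα1, hα2, hα3, hβ1, hβ2, hβ3, hrα4, hrβ4, hrβ5, hrα5, hrα6, hrβ6⟩
  have hu1 : u^2 + 1 ≠ 0 :=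
    sq_add_one_ne_zero_of_quartic (Ring.two_ne_zero (by rwa [ZMod.ringChar_zmod_n])) hφ
  exact ⟨h.alpha_pattern hφ hu1, hβ1, by rw [hβ2]; ring, h.beta_pattern hφ hu1,
    fun i hi => h.beta_ne_zero hφ hu1 hi⟩
end

section
/- Let p be an odd prime and δ, φ ∈ ℤ/pℤ with δ² - δ + 1 = 0 and φ² = 2δ. Set u = φ, v = δ and define α, β by the Theorem B2 recurrences. Then for all k ≥ 0: α_{3k+1} = -φ, α_{3k+2}+α_{3k+3} = φ, α_{9k+2} = φ/δ, α_{9k+5} = α_{3k+3}, α_{9k+8} = φδ, β₁ = 1, β₂ = δ, β_{3k+3} = -δ, β_{3k+4}+β_{3k+5} = δ, β_{9k+1} = β_{3k+1}, β_{9k+4} = -δ⁻¹, β_{9k+7} = 1. In particular β_i ≠ 0 for all i. -/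
theorem stmt4 (p : ℕ) [Fact p.Prime] (hodd : p ≠ 2)
    (δ φ : ZMod p) (hδ : δ^2 - δ + 1 = 0) (hφ : φ^2 = 2*δ)
    (u v : ZMod p) (hu : u = φ) (hv : v = δ)
    (α β : ℕ → ZMod p)
    (hα1 : α 1 = -u) (hα2 : α 2 = u * (2*v - 1 - u^2) / (v - u^2))
    (hα3 : α 3 = -u * (v - 1) / (v - u^2))
    (hβ1 : β 1 = 1) (hβ2 : β 2 = u^2 - v)
    (hβ3 : β 3 = (u^2 + u^4 + v^3 - 3*u^2*v) / (v - u^2)^2)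
    (hrα4 : ∀ k : ℕ, α (3*k+4) = -u)
    (hrβ4 : ∀ k : ℕ, β (3*k+4) = β (k+2) / (β (3*k+3) * β (3*k+2)))
    (hrβ5 : ∀ k : ℕ, β (3*k+5) = u^2 - v - β (3*k+4))
    (hrα5 : ∀ k : ℕ, α (3*k+5) = u - (α (k+2) + u*v - α (3*k+2) * β (3*k+4)) / β (3*k+5))
    (hrα6 : ∀ k : ℕ, α (3*k+6) = u - α (3*k+5))
    (hrβ6 : ∀ k : ℕ, β (3*k+6) = v - α (3*k+5) * α (3*k+6)) :
    (∀ k : ℕ, α (3*k+1) = -φ ∧ α (3*k+2) + α (3*k+3) = φ ∧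
      α (9*k+2) = φ/δ ∧ α (9*k+5) = α (3*k+3) ∧ α (9*k+8) = φ*δ) ∧
    β 1 = 1 ∧ β 2 = δ ∧
    (∀ k : ℕ, β (3*k+3) = -δ ∧ β (3*k+4) + β (3*k+5) = δ ∧
      β (9*k+1) = β (3*k+1) ∧ β (9*k+4) = -δ⁻¹ ∧ β (9*k+7) = 1) ∧
    (∀ i : ℕ, 1 ≤ i → β i ≠ 0) := by
  subst hu hv
  -- basic facts
  have hd0 : v ≠ 0 := by
    intro h
    rw [h] at hδ
    norm_num at hδ
  have hd1x : v - 1 ≠ 0 := by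
    intro h
    exact one_ne_zero (α := ZMod p) (by linear_combination hδ - v*h)
  have hδ3 : v^3 = -1 := by linear_combination (v+1)*hδ
  have hds : v - v^2 = 1 := by linear_combination -hδ
  have hneg : v - 2*v ≠ 0 := by intro h; exact hd0 (by linear_combination -h)
  have hsub : ∀ x : ZMod p, x = 1 ∨ x = v^2 → v - x ≠ 0 := by
    rintro x (rfl | rfl)
    · exact hd1x
    · intro hc; exact one_ne_zero (α := ZMod p) (by linear_combination hc + hδ)
  -- base values
  have hα2' : α 2 = u/v := by
    rw [hα2, hφ, div_eq_div_iff hneg hd0]; ring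
  have hα3' : α 3 = u*v := by
    rw [hα3, hφ, div_eq_iff hneg]; linear_combination u*hδ
  have hβ2' : β 2 = v := by rw [hβ2]; linear_combination hφ
  have hφ4 : u^4 = 4*v^2 := by linear_combination (u^2 + 2*v) * hφ
  have hβ3' : β 3 = -v := by
    rw [hβ3, hφ4, hφ, div_eq_iff (pow_ne_zero 2 hneg)]
    linear_combination (2*v)*hδ
  -- master induction
  have master : ∀ k : ℕ,
      α (3*k+2) * (u - α (3*k+2)) = 2*v ∧
      α (3*k+3) = u - α (3*k+2) ∧
      β (3*k+3) = -v ∧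
      (β (3*k+1) = 1 ∨ β (3*k+1) = v^2) ∧
      β (3*k+2) = (if k = 0 then v else v - β (3*k+1)) ∧
      (k % 3 = 0 → α (3*k+2) = u/v) ∧
      (k % 3 = 1 → α (3*k+2) = u - α (3*((k-1)/3)+2)) ∧
      (k % 3 = 2 → α (3*k+2) = u*v) ∧
      (k % 3 = 1 → β (3*k+1) = v^2) ∧
      (k % 3 = 2 → β (3*k+1) = 1) ∧
      (k % 3 = 0 → β (3*k+1) = β (3*(k/3)+1)) := by
    intro k
    induction k using Nat.strong_induction_on with
    | _ k ih =>
      rcases k with _ | k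
      · -- base case k = 0
        norm_num
        refine ⟨?_, ?_, hβ3', Or.inl hβ1, hβ2', ?_⟩
        · rw [hα2']
          field_simp
          linear_combination (-2*v)*hδ + (v - 1)*hφ
        · rw [hα2', hα3']
          field_simp
          linear_combination u*hδ
        · rw [hα2']
      · -- step: prove P (k+1)
        have hb5g : β (3*k+5) = v - β (3*k+4) := by linear_combination hrβ5 k + hφ
        have e1 : 3*(k+1)+1 = 3*k+4 := by ring
        have e2 : 3*(k+1)+2 = 3*k+5 := by ring
        have e3 : 3*(k+1)+3 = 3*k+6 := by ring
        obtain ⟨j, hj⟩ : ∃ j, k = 3*j ∨ k = 3*j+1 ∨ k = 3*j+2 := ⟨k/3, by omega⟩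
        obtain ⟨Q1, Q2, Q3, Q4, Q5, Q6, Q7, Q8, Q9, Q10, Q11⟩ := ih k (by omega)
        rcases hj with hj | hj | hj
        · -- k = 3*j
          subst hj
          obtain ⟨R1, R2, R3, R4, R5, R6, R7, R8, R9, R10, R11⟩ := ih j (by omega)
          have hk6 := Q6 (by omega)
          have hk11 := Q11 (by omega)
          have hdiv : (3*j)/3 = j := by omega
          rw [hdiv] at hk11
          have hb4 : β (3*(3*j)+4) = v^2 := by
            rcases eq_or_ne j 0 with rfl | hj0
            · have h := hrβ4 0
              norm_num at h ⊢
              rw [h, hβ2', hβ3', div_eq_iff (mul_ne_zero (neg_ne_zero.mpr hd0) hd0)]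
              linear_combination v*hδ3
            · have hXne : v - β (3*j+1) ≠ 0 := hsub _ R4
              rw [hrβ4 (3*j), R5, if_neg hj0, Q3, Q5, if_neg (show ¬3*j = 0 by omega), hk11,
                div_eq_iff (mul_ne_zero (neg_ne_zero.mpr hd0) hXne)]
              linear_combination (v - β (3*j+1)) * hδ3
          have hb5x : β (3*(3*j)+5) = v - v^2 := by rw [hb5g, hb4]
          have ha5 : α (3*(3*j)+5) = u - α (3*j+2) := by
            rw [hrα5 (3*j), hk6, hb4, hb5x, hds, div_one]
            have hx : u/v*v^2 = u*v := by field_simp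
            rw [hx]; ring
          have hprod : α (3*(3*j)+5) * (u - α (3*(3*j)+5)) = 2*v := by
            rw [ha5]; linear_combination R1
          have hb6 : β (3*(3*j)+6) = -v := by
            rw [hrβ6 (3*j), hrα6 (3*j)]; linear_combination -hprod
          refine ⟨?_, ?_, ?_, ?_, ?_, ?_, ?_, ?_, ?_, ?_, ?_⟩
          · rw [e2]; exact hprod
          · rw [e3, e2]; exact hrα6 (3*j)
          · rw [e3]; exact hb6
          · rw [e1, hb4]; exact Or.inr rfl
          · rw [if_neg (show ¬3*j+1 = 0 by omega), e2, e1]; exact hb5g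
          · intro h; exact absurd h (by omega)
          · intro _
            have hq : (3*j+1-1)/3 = j := by omega
            rw [hq, e2]; exact ha5
          · intro h; exact absurd h (by omega)
          · intro _; rw [e1]; exact hb4
          · intro h; exact absurd h (by omega)
          · intro h; exact absurd h (by omega)
        · -- k = 3*j+1
          subst hj
          obtain ⟨R1, R2, R3, R4, R5, R6, R7, R8, R9, R10, R11⟩ := ih j (by omega)
          have hq : (3*j+1-1)/3 = j := by omega
          have hk7 := Q7 (by omega)
          rw [hq] at hk7
          have hk9 := Q9 (by omega)
          have e4 : 3*j+1+2 = 3*j+3 := by omega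
          have hQ5x : β (3*(3*j+1)+2) = v - v^2 := by
            rw [Q5, if_neg (show ¬3*j+1 = 0 by omega), hk9]
          have hb4 : β (3*(3*j+1)+4) = 1 := by
            rw [hrβ4 (3*j+1), e4, R3, Q3, hQ5x, hds, mul_one,
              div_self (neg_ne_zero.mpr hd0)]
          have hb5x : β (3*(3*j+1)+5) = v - 1 := by rw [hb5g, hb4]
          have ha5 : α (3*(3*j+1)+5) = u*v := by
            rw [hrα5 (3*j+1), e4, R2, hk7, hb4, hb5x]
            field_simp
            linear_combination (-u)*hδ
          have hprod : α (3*(3*j+1)+5) * (u - α (3*(3*j+1)+5)) = 2*v := by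
            rw [ha5]; linear_combination (v-v^2)*hφ - 2*hδ3 + 2*hδ
          have hb6 : β (3*(3*j+1)+6) = -v := by
            rw [hrβ6 (3*j+1), hrα6 (3*j+1)]; linear_combination -hprod
          refine ⟨?_, ?_, ?_, ?_, ?_, ?_, ?_, ?_, ?_, ?_, ?_⟩
          · rw [e2]; exact hprod
          · rw [e3, e2]; exact hrα6 (3*j+1)
          · rw [e3]; exact hb6
          · rw [e1, hb4]; exact Or.inl rfl
          · rw [if_neg (show ¬3*j+1+1 = 0 by omega), e2, e1]; exact hb5g
          · intro h; exact absurd h (by omega)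
          · intro h; exact absurd h (by omega)
          · intro _; rw [e2]; exact ha5
          · intro h; exact absurd h (by omega)
          · intro _; rw [e1]; exact hb4
          · intro h; exact absurd h (by omega)
        · -- k = 3*j+2
          subst hj
          obtain ⟨S1, S2, S3, S4, S5, S6, S7, S8, S9, S10, S11⟩ := ih (j+1) (by omega)
          have hk8 := Q8 (by omega)
          have hk10 := Q10 (by omega)
          have e5 : 3*j+2+2 = 3*(j+1)+1 := by omega
          have e6 : 3*(j+1)+1 = 3*j+4 := by omega
          have hden : β (3*(3*j+2)+3) * β (3*(3*j+2)+2) = 1 := by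
            rw [Q3, Q5, if_neg (show ¬3*j+2 = 0 by omega), hk10]
            linear_combination -hδ
          have hb4 : β (3*(3*j+2)+4) = β (3*(j+1)+1) := by
            rw [hrβ4 (3*j+2), e5, hden, div_one]
          have hGne : v - β (3*(j+1)+1) ≠ 0 := hsub _ S4
          have hb5x : β (3*(3*j+2)+5) = v - β (3*(j+1)+1) := by rw [hb5g, hb4]
          have ha5 : α (3*(3*j+2)+5) = u/v := by
            rw [hrα5 (3*j+2), e5, e6, hrα4 j, hk8, hb4, hb5x]
            field_simp
            linear_combination (u * β (3*(j+1)+1)) * hδ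
          have hprod : α (3*(3*j+2)+5) * (u - α (3*(3*j+2)+5)) = 2*v := by
            rw [ha5]
            field_simp
            linear_combination (-2*v)*hδ + (v - 1)*hφ
          have hb6 : β (3*(3*j+2)+6) = -v := by
            rw [hrβ6 (3*j+2), hrα6 (3*j+2)]; linear_combination -hprod
          refine ⟨?_, ?_, ?_, ?_, ?_, ?_, ?_, ?_, ?_, ?_, ?_⟩
          · rw [e2]; exact hprod
          · rw [e3, e2]; exact hrα6 (3*j+2)
          · rw [e3]; exact hb6
          · rw [e1, hb4]; exact S4
          · rw [if_neg (show ¬3*j+2+1 = 0 by omega), e2, e1]; exact hb5g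
          · intro _; rw [e2]; exact ha5
          · intro h; exact absurd h (by omega)
          · intro h; exact absurd h (by omega)
          · intro h; exact absurd h (by omega)
          · intro h; exact absurd h (by omega)
          · intro _
            have hq : (3*j+2+1)/3 = j+1 := by omega
            rw [hq, e1]; exact hb4
  -- conclude
  have halpha1 : ∀ k : ℕ, α (3*k+1) = -u := by
    intro k
    rcases k with _ | n
    · exact hα1
    · have e : 3*(n+1)+1 = 3*n+4 := by ring
      rw [e, hrα4 n]
  have hinv : -v⁻¹ = v^2 := by
    field_simp
    linear_combination -hδ3
  refine ⟨?_, hβ1, hβ2', ?_, ?_⟩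
  · intro k
    obtain ⟨c1, c2, c3, c4, c5, c6, c7, c8, c9, c10, c11⟩ := master k
    refine ⟨halpha1 k, by rw [c2]; ring, ?_, ?_, ?_⟩
    · obtain ⟨_, _, _, _, _, m6, _⟩ := master (3*k)
      have := m6 (by omega)
      rw [show 9*k+2 = 3*(3*k)+2 by ring]
      exact this
    · obtain ⟨_, _, _, _, _, _, m7, _⟩ := master (3*k+1)
      have h := m7 (by omega)
      rw [show (3*k+1-1)/3 = k by omega] at h
      rw [show 9*k+5 = 3*(3*k+1)+2 by ring, h, c2]
    · obtain ⟨_, _, _, _, _, _, _, m8, _⟩ := master (3*k+2)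
      have := m8 (by omega)
      rw [show 9*k+8 = 3*(3*k+2)+2 by ring]
      exact this
  · intro k
    obtain ⟨c1, c2, c3, c4, c5, c6, c7, c8, c9, c10, c11⟩ := master k
    refine ⟨c3, by linear_combination hrβ5 k + hφ, ?_, ?_, ?_⟩
    · obtain ⟨_, _, _, _, _, _, _, _, _, _, m11⟩ := master (3*k)
      have h := m11 (by omega)
      rw [show (3*k)/3 = k by omega] at h
      rw [show 9*k+1 = 3*(3*k)+1 by ring]
      exact h
    · obtain ⟨_, _, _, _, _, _, _, _, m9, _⟩ := master (3*k+1)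
      have h := m9 (by omega)
      rw [show 9*k+4 = 3*(3*k+1)+1 by ring, h, ← hinv]
    · obtain ⟨_, _, _, _, _, _, _, _, _, m10, _⟩ := master (3*k+2)
      have := m10 (by omega)
      rw [show 9*k+7 = 3*(3*k+2)+1 by ring]
      exact this
  · intro i hi
    obtain ⟨k, hk⟩ : ∃ k, i = 3*k+1 ∨ i = 3*k+2 ∨ i = 3*k+3 := ⟨(i-1)/3, by omega⟩
    obtain ⟨c1, c2, c3, c4, c5, _⟩ := master k
    rcases hk with h | h | h <;> subst h
    · rcases c4 with h | h <;> rw [h]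
      · exact one_ne_zero
      · exact pow_ne_zero 2 hd0
    · rw [c5]
      split_ifs with h0
      · exact hd0
      · exact hsub _ c4
    · rw [c3]
      exact neg_ne_zero.mpr hd0
end

section
/- Let p be an odd prime and δ ∈ ℤ/pℤ with δ² + δ + 1 = 0. Set u = 0, v = δ and define α, β by the Theorem B2 recurrences. Then α_k = 0 for all k ≥ 1, and β₁ = 1, β₂ = -δ, and for all k ≥ 0: β_{3k+3} = δ, β_{3k+4}+β_{3k+5} = -δ, β_{9k+1} = β_{3k+1}, β_{9k+4} = δ⁻¹, β_{9k+7} = 1. In particular, β_i ≠ 0 for all i. -/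
theorem stmt5 (p : ℕ) [Fact p.Prime] (hodd : p ≠ 2)
    (δ : ZMod p) (hδ : δ^2 + δ + 1 = 0)
    (u v : ZMod p) (hu : u = 0) (hv : v = δ)
    (α β : ℕ → ZMod p)
    (hα1 : α 1 = -u) (hα2 : α 2 = u * (2*v - 1 - u^2) / (v - u^2))
    (hα3 : α 3 = -u * (v - 1) / (v - u^2))
    (hβ1 : β 1 = 1) (hβ2 : β 2 = u^2 - v)
    (hβ3 : β 3 = (u^2 + u^4 + v^3 - 3*u^2*v) / (v - u^2)^2)
    (hrα4 : ∀ k : ℕ, α (3*k+4) = -u)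
    (hrβ4 : ∀ k : ℕ, β (3*k+4) = β (k+2) / (β (3*k+3) * β (3*k+2)))
    (hrβ5 : ∀ k : ℕ, β (3*k+5) = u^2 - v - β (3*k+4))
    (hrα5 : ∀ k : ℕ, α (3*k+5) = u - (α (k+2) + u*v - α (3*k+2) * β (3*k+4)) / β (3*k+5))
    (hrα6 : ∀ k : ℕ, α (3*k+6) = u - α (3*k+5))
    (hrβ6 : ∀ k : ℕ, β (3*k+6) = v - α (3*k+5) * α (3*k+6)) :
    (∀ k : ℕ, 1 ≤ k → α k = 0) ∧
    β 1 = 1 ∧ β 2 = -δ ∧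
    (∀ k : ℕ, β (3*k+3) = δ ∧ β (3*k+4) + β (3*k+5) = -δ ∧
      β (9*k+1) = β (3*k+1) ∧ β (9*k+4) = δ⁻¹ ∧ β (9*k+7) = 1) ∧
    (∀ i : ℕ, 1 ≤ i → β i ≠ 0) := by
  subst hu hv
  have hδ0 : v ≠ 0 := by
    intro h
    exact one_ne_zero (by rw [h] at hδ; linear_combination hδ)
  have hinv : v⁻¹ = v^2 := inv_eq_of_mul_eq_one_right (by linear_combination (v-1) * hδ)
  -- all α vanish
  have hαz : ∀ n : ℕ, 1 ≤ n → α n = 0 := by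
    intro n
    induction n using Nat.strong_induction_on with
    | _ n ih =>
      intro hn
      rcases Nat.lt_or_ge n 4 with h4 | h4
      · interval_cases n
        · rw [hα1]; ring
        · rw [hα2]; simp
        · rw [hα3]; simp
      · obtain ⟨k, hk⟩ : ∃ k, n = 3*k+4 ∨ n = 3*k+5 ∨ n = 3*k+6 := ⟨(n-4)/3, by omega⟩
        have h5 : α (3*k+5) = 0 := by
          rw [hrα5 k, ih (k+2) (by omega) (by omega), ih (3*k+2) (by omega) (by omega)]
          simp
        rcases hk with rfl | rfl | rfl
        · rw [hrα4 k]; ring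
        · exact h5
        · rw [hrα6 k, h5]; ring
  -- β at multiples of 3
  have hβ3' : β 3 = v := by
    rw [hβ3, div_eq_iff (by simpa using pow_ne_zero 2 hδ0)]
    ring
  have hB3 : ∀ k : ℕ, β (3*k+3) = v := by
    intro k
    rcases k with _ | k
    · simpa using hβ3'
    · have e : 3*(k+1)+3 = 3*k+6 := by ring
      rw [e, hrβ6 k, hαz (3*k+5) (by omega)]
      ring
  have hβ2' : β 2 = -v := by rw [hβ2]; ring
  -- main structural induction
  have main : ∀ n : ℕ,
      (β (3*n+4) = 1 ∨ β (3*n+4) = v^2) ∧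
      (n % 3 = 1 → β (3*n+4) = 1) ∧
      (n % 3 = 0 → β (3*n+4) = v^2) ∧
      (∀ m : ℕ, n = 3*m+2 → β (3*n+4) = β (3*m+4)) := by
    intro n
    induction n using Nat.strong_induction_on with
    | _ n ih =>
      rcases Nat.eq_zero_or_pos n with rfl | hn
      · have h4 : β (3*0+4) = v^2 := by
          rw [hrβ4 0, hβ2', hB3 0,
            div_eq_iff (mul_ne_zero hδ0 (neg_ne_zero.mpr hδ0))]
          linear_combination (v^2 - v) * hδ
        refine ⟨Or.inr h4, by omega, fun _ => h4, by omega⟩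
      · have hβ2n : β (3*n+2) = -v - β (3*n+1) := by
          have h := hrβ5 (n-1)
          have e : 3*(n-1)+5 = 3*n+2 := by omega
          have e' : 3*(n-1)+4 = 3*n+1 := by omega
          rw [e, e'] at h
          rw [h]; ring
        have hrec : β (3*n+4) = β (n+2) / (v * β (3*n+2)) := by
          rw [hrβ4 n, hB3 n]
        obtain ⟨m, hm⟩ : ∃ m, n = 3*m+1 ∨ n = 3*m+2 ∨ n = 3*m+3 := ⟨(n-1)/3, by omega⟩
        rcases hm with hm | hm | hm
        · -- n = 3m+1 : value 1
          have ht : β (3*n+1) = v^2 := by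
            have e : 3*n+1 = 3*(3*m)+4 := by omega
            rw [e]
            exact (ih (3*m) (by omega)).2.2.1 (by omega)
          have hn2 : β (n+2) = v := by
            have e : n+2 = 3*m+3 := by omega
            rw [e]; exact hB3 m
          have hval : β (3*n+4) = 1 := by
            rw [hrec, hn2, hβ2n, ht]
            have h1 : -v - v^2 = 1 := by linear_combination -hδ
            rw [h1, mul_one, div_self hδ0]
          exact ⟨Or.inl hval, fun _ => hval, by omega, by omega⟩
        · -- n = 3m+2 : value β(3m+4)
          have ht : β (3*n+1) = 1 := by
            have e : 3*n+1 = 3*(3*m+1)+4 := by omega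
            rw [e]
            exact (ih (3*m+1) (by omega)).2.1 (by omega)
          have hn2 : β (n+2) = β (3*m+4) := by
            have e : n+2 = 3*m+4 := by omega
            rw [e]
          have hval : β (3*n+4) = β (3*m+4) := by
            rw [hrec, hn2, hβ2n, ht]
            have h1 : v * (-v - 1) = 1 := by linear_combination -hδ
            rw [h1, div_one]
          refine ⟨?_, by omega, by omega, ?_⟩
          · rcases (ih m (by omega)).1 with h | h
            · exact Or.inl (hval.trans h)
            · exact Or.inr (hval.trans h)
          · intro m' hm'
            have : m' = m := by omega
            subst this
            exact hval
        · -- n = 3m+3 : value v^2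
          have hAm := (ih m (by omega)).1
          have ht : β (3*n+1) = β (3*m+4) := by
            have e : 3*n+1 = 3*(3*m+2)+4 := by omega
            rw [e]
            exact (ih (3*m+2) (by omega)).2.2.2 m rfl
          have hn2 : β (n+2) = -v - β (3*m+4) := by
            have e : n+2 = 3*m+5 := by omega
            rw [e, hrβ5 m]; ring
          have hx : (-v - β (3*m+4)) ≠ 0 := by
            rcases hAm with h | h <;> rw [h] <;> intro hc
            · exact one_ne_zero (by linear_combination hδ + v * hc)
            · exact one_ne_zero (by linear_combination hδ + hc)
          have hval : β (3*n+4) = v^2 := by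
            rw [hrec, hn2, hβ2n, ht,
              div_eq_iff (mul_ne_zero hδ0 hx)]
            linear_combination (-(-v - β (3*m+4)) * (v - 1)) * hδ
          exact ⟨Or.inr hval, by omega, fun _ => hval, by omega⟩
  refine ⟨hαz, hβ1, hβ2', ?_, ?_⟩
  · intro k
    refine ⟨hB3 k, by rw [hrβ5 k]; ring, ?_, ?_, ?_⟩
    · rcases k with _ | k
      · norm_num
      · have e : 9*(k+1)+1 = 3*(3*k+2)+4 := by ring
        have e2 : 3*(k+1)+1 = 3*k+4 := by ring
        rw [e, e2]
        exact (main (3*k+2)).2.2.2 k rfl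
    · have e : 9*k+4 = 3*(3*k)+4 := by ring
      rw [e, hinv]
      exact (main (3*k)).2.2.1 (by omega)
    · have e : 9*k+7 = 3*(3*k+1)+4 := by ring
      rw [e]
      exact (main (3*k+1)).2.1 (by omega)
  · intro i hi
    rcases Nat.lt_or_ge i 3 with h3 | h3
    · interval_cases i
      · rw [hβ1]; exact one_ne_zero
      · rw [hβ2']; exact neg_ne_zero.mpr hδ0
    · obtain ⟨k, hk⟩ : ∃ k, i = 3*k+3 ∨ i = 3*k+4 ∨ i = 3*k+5 := ⟨(i-3)/3, by omega⟩
      rcases hk with rfl | rfl | rfl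
      · rw [hB3 k]; exact hδ0
      · rcases (main k).1 with h | h <;> rw [h]
        · exact one_ne_zero
        · exact pow_ne_zero 2 hδ0
      · have h5 : β (3*k+5) = -v - β (3*k+4) := by rw [hrβ5 k]; ring
        rw [h5]
        rcases (main k).1 with h | h <;> rw [h] <;> intro hc
        · exact one_ne_zero (by linear_combination hδ + v * hc)
        · exact one_ne_zero (by linear_combination hδ + hc)
end

section
/- Let p > 3 be prime and δ ∈ ℤ/pℤ with δ² + δ + 1 = 0. Set u = 2δ², v = δ and define α, β by the Theorem B2 recurrences. Then for all k ≥ 0: α_{3k+1} = -u, α_{3k+2}+α_{3k+3} = u, α_{9k+2} = -(2δ+4)/3, α_{9k+5} = (u+α_{3k+2})/3, α_{9k+8} = -(4δ+2)/3, β₁ = 1, β₂ = 3δ, β_{3k+4}+β_{3k+5} = 3δ, β_{9k+1} = β_{3k+1}, β_{9k+4} = -3/δ, β_{9k+7} = -3, β_{9k+3} = -δ/3, β_{9k+6} = β_{3k+3}/9, β_{9k+9} = -δ/3. -/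
/-!
With `u = 2δ²`, `v = δ` one has `u² - v = 3δ` and `uv = 2`, and the recurrence becomes rigid on the
windows `9k+1, …, 9k+9`, which we treat by strong induction on `k`. Once the first three values of a
window are known (`β` copies `β (3k+1)`, `β (3k+2)`, while `β (9k+3) = -δ/3` and
`α (9k+2) = -(2δ+4)/3`), the other six follow by direct computation, and since
`β (9k+8) β (9k+9) = (3δ+3)(-δ/3) = 1` the next window again starts in this way.
The denominators never vanish, which matters because `x / 0 = 0`: `β (3n+3)` is `-δ/3` times a
power of `1/9`, and `β (3n+5) = 3δ - β (3n+4)` with `β (3n+4) ∈ {-3/δ, -3}`, read off from earlier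
windows.
-/

section CubeRoot

variable {F : Type*} [Field F] {δ : F}

theorem cube_eq_one_of_sq_add_self_add_one_eq_zero (hδ : δ ^ 2 + δ + 1 = 0) : δ ^ 3 = 1 := by
  linear_combination (δ - 1) * hδ

theorem ne_zero_of_sq_add_self_add_one_eq_zero (hδ : δ ^ 2 + δ + 1 = 0) : δ ≠ 0 := by
  rintro rfl
  norm_num at hδ

theorem add_one_ne_zero_of_sq_add_self_add_one_eq_zero (hδ : δ ^ 2 + δ + 1 = 0) : δ + 1 ≠ 0 := by
  intro h
  exact one_ne_zero (by linear_combination hδ - δ * h)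

theorem self_sub_two_mul_sq_sq (hδ : δ ^ 2 + δ + 1 = 0) : δ - (2 * δ ^ 2) ^ 2 = -(3 * δ) := by
  linear_combination (4 * δ - 4 * δ ^ 2) * hδ

end CubeRoot

theorem nine_ne_zero_of_three_ne_zero {R : Type*} [Semiring R] [NoZeroDivisors R]
    (h3 : (3 : R) ≠ 0) : (9 : R) ≠ 0 := by
  have h := mul_ne_zero h3 h3
  norm_num at h
  exact h

structure IsB2Recurrence {F : Type*} [Field F] (u v : F) (α β : ℕ → F) : Prop where
  α_one : α 1 = -u
  α_two : α 2 = u * (2 * v - 1 - u ^ 2) / (v - u ^ 2)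
  α_three : α 3 = -u * (v - 1) / (v - u ^ 2)
  β_one : β 1 = 1
  β_two : β 2 = u ^ 2 - v
  β_three : β 3 = (u ^ 2 + u ^ 4 + v ^ 3 - 3 * u ^ 2 * v) / (v - u ^ 2) ^ 2
  α_three_mul_add_four (k : ℕ) : α (3 * k + 4) = -u
  β_three_mul_add_four (k : ℕ) : β (3 * k + 4) = β (k + 2) / (β (3 * k + 3) * β (3 * k + 2))
  β_three_mul_add_five (k : ℕ) : β (3 * k + 5) = u ^ 2 - v - β (3 * k + 4)
  α_three_mul_add_five (k : ℕ) :
    α (3 * k + 5) = u - (α (k + 2) + u * v - α (3 * k + 2) * β (3 * k + 4)) / β (3 * k + 5)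
  α_three_mul_add_six (k : ℕ) : α (3 * k + 6) = u - α (3 * k + 5)
  β_three_mul_add_six (k : ℕ) : β (3 * k + 6) = v - α (3 * k + 5) * α (3 * k + 6)

structure NineBlock {F : Type*} [Field F] (δ : F) (α β : ℕ → F) (k : ℕ) : Prop where
  β_one : β (9 * k + 1) = β (3 * k + 1)
  β_two : β (9 * k + 2) = β (3 * k + 2)
  β_three : β (9 * k + 3) = -δ / 3
  α_two : α (9 * k + 2) = -(2 * δ + 4) / 3
  β_four : β (9 * k + 4) = -3 / δ
  β_five : β (9 * k + 5) = -3
  α_five : α (9 * k + 5) = (2 * δ ^ 2 + α (3 * k + 2)) / 3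
  β_six : β (9 * k + 6) = β (3 * k + 3) / 9
  β_seven : β (9 * k + 7) = -3
  β_eight : β (9 * k + 8) = 3 * δ + 3
  α_eight : α (9 * k + 8) = -(4 * δ + 2) / 3
  β_nine : β (9 * k + 9) = -δ / 3

namespace IsB2Recurrence

variable {F : Type*} [Field F] {δ : F} {α β : ℕ → F}

theorem β_two_eq (hs : IsB2Recurrence (2 * δ ^ 2) δ α β) (hδ : δ ^ 2 + δ + 1 = 0) :
    β 2 = 3 * δ := by
  rw [hs.β_two]
  linear_combination (4 * δ ^ 2 - 4 * δ) * hδ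

theorem α_two_eq (hs : IsB2Recurrence (2 * δ ^ 2) δ α β) (hδ : δ ^ 2 + δ + 1 = 0)
    (h3 : (3 : F) ≠ 0) : α 2 = -(2 * δ + 4) / 3 := by
  have hδ0 := ne_zero_of_sq_add_self_add_one_eq_zero hδ
  rw [hs.α_two, self_sub_two_mul_sq_sq hδ]
  field_simp
  linear_combination (4 - 8 * δ ^ 2 + 8 * δ ^ 3) * hδ

theorem α_three_eq (hs : IsB2Recurrence (2 * δ ^ 2) δ α β) (hδ : δ ^ 2 + δ + 1 = 0)
    (h3 : (3 : F) ≠ 0) : α 3 = -(4 * δ + 2) / 3 := by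
  have hδ0 := ne_zero_of_sq_add_self_add_one_eq_zero hδ
  rw [hs.α_three, self_sub_two_mul_sq_sq hδ]
  field_simp
  linear_combination 2 * hδ

theorem β_three_eq (hs : IsB2Recurrence (2 * δ ^ 2) δ α β) (hδ : δ ^ 2 + δ + 1 = 0)
    (h3 : (3 : F) ≠ 0) : β 3 = -δ / 3 := by
  have hδ0 := ne_zero_of_sq_add_self_add_one_eq_zero hδ
  rw [hs.β_three, self_sub_two_mul_sq_sq hδ]
  field_simp
  linear_combination (4 - 16 * δ ^ 2 + 16 * δ ^ 3) * hδ

theorem β_three_mul_add_five_eq (hs : IsB2Recurrence (2 * δ ^ 2) δ α β)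
    (hδ : δ ^ 2 + δ + 1 = 0) (k : ℕ) : β (3 * k + 5) = 3 * δ - β (3 * k + 4) := by
  rw [hs.β_three_mul_add_five]
  linear_combination (4 * δ ^ 2 - 4 * δ) * hδ

theorem α_three_mul_add_five_eq (hs : IsB2Recurrence (2 * δ ^ 2) δ α β)
    (hδ : δ ^ 2 + δ + 1 = 0) (k : ℕ) : α (3 * k + 5) =
      2 * δ ^ 2 - (α (k + 2) + 2 - α (3 * k + 2) * β (3 * k + 4)) / β (3 * k + 5) := by
  rw [hs.α_three_mul_add_five, show 2 * δ ^ 2 * δ = 2 by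
    linear_combination 2 * cube_eq_one_of_sq_add_self_add_one_eq_zero hδ]

theorem α_three_mul_add_one (hs : IsB2Recurrence (2 * δ ^ 2) δ α β) (n : ℕ) :
    α (3 * n + 1) = -(2 * δ ^ 2) := by
  cases n with
  | zero => exact hs.α_one
  | succ n => exact hs.α_three_mul_add_four n

theorem α_three_mul_add_three (hs : IsB2Recurrence (2 * δ ^ 2) δ α β) (hδ : δ ^ 2 + δ + 1 = 0)
    (h3 : (3 : F) ≠ 0) (n : ℕ) : α (3 * n + 3) = 2 * δ ^ 2 - α (3 * n + 2) := by
  cases n with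
  | zero =>
    rw [show 3 * 0 + 3 = 3 from rfl, hs.α_three_eq hδ h3, hs.α_two_eq hδ h3]
    field_simp
    linear_combination (-6) * hδ
  | succ n => exact hs.α_three_mul_add_six n

theorem β_three_mul_add_three (hs : IsB2Recurrence (2 * δ ^ 2) δ α β) (hδ : δ ^ 2 + δ + 1 = 0)
    (h3 : (3 : F) ≠ 0) (n : ℕ) : β (3 * n + 3) = δ - α (3 * n + 2) * α (3 * n + 3) := by
  cases n with
  | zero =>
    rw [show 3 * 0 + 3 = 3 from rfl, hs.β_three_eq hδ h3, hs.α_three_eq hδ h3, hs.α_two_eq hδ h3]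
    field_simp
    linear_combination 8 * hδ
  | succ n => exact hs.β_three_mul_add_six n

theorem middle_third_of_head (hs : IsB2Recurrence (2 * δ ^ 2) δ α β) (hδ : δ ^ 2 + δ + 1 = 0)
    (h3 : (3 : F) ≠ 0) {k : ℕ} (hβ2 : β (9 * k + 2) = β (3 * k + 2)) (hβ2_ne : β (3 * k + 2) ≠ 0)
    (hβ3 : β (9 * k + 3) = -δ / 3) (hα2 : α (9 * k + 2) = -(2 * δ + 4) / 3) :
    β (9 * k + 4) = -3 / δ ∧ β (9 * k + 5) = -3 ∧
      α (9 * k + 5) = (2 * δ ^ 2 + α (3 * k + 2)) / 3 ∧ β (9 * k + 6) = β (3 * k + 3) / 9 := by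
  have hδ0 := ne_zero_of_sq_add_self_add_one_eq_zero hδ
  have e4 := hs.β_three_mul_add_four (3 * k)
  have e5 := hs.β_three_mul_add_five_eq hδ (3 * k)
  have f5 := hs.α_three_mul_add_five_eq hδ (3 * k)
  have f6 := hs.α_three_mul_add_six (3 * k)
  have e6 := hs.β_three_mul_add_six (3 * k)
  simp only [← Nat.mul_assoc, Nat.reduceMul] at e4 e5 f5 f6 e6
  have hβ4 : β (9 * k + 4) = -3 / δ := by
    rw [e4, hβ3, hβ2]
    field_simp
  have hβ5 : β (9 * k + 5) = -3 := by
    rw [e5, hβ4]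
    field_simp
    linear_combination hδ
  have hα5 : α (9 * k + 5) = (2 * δ ^ 2 + α (3 * k + 2)) / 3 := by
    rw [f5, hα2, hβ4, hβ5]
    field_simp
    linear_combination (4 * δ - 4) * hδ
  refine ⟨hβ4, hβ5, hα5, ?_⟩
  have h9 := nine_ne_zero_of_three_ne_zero h3
  rw [e6, f6, hα5, hs.β_three_mul_add_three hδ h3 k, hs.α_three_mul_add_three hδ h3 k]
  field_simp
  linear_combination (72 * δ - 72 * δ ^ 2) * hδ

theorem last_third_of_middle_third (hs : IsB2Recurrence (2 * δ ^ 2) δ α β)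
    (hδ : δ ^ 2 + δ + 1 = 0) (h3 : (3 : F) ≠ 0) {k : ℕ} (hβ5 : β (9 * k + 5) = -3)
    (hα5 : α (9 * k + 5) = (2 * δ ^ 2 + α (3 * k + 2)) / 3)
    (hβ6 : β (9 * k + 6) = β (3 * k + 3) / 9) (hβ3_ne : β (3 * k + 3) ≠ 0) :
    β (9 * k + 7) = -3 ∧ β (9 * k + 8) = 3 * δ + 3 ∧ α (9 * k + 8) = -(4 * δ + 2) / 3 ∧
      β (9 * k + 9) = -δ / 3 := by
  have hδ1 := add_one_ne_zero_of_sq_add_self_add_one_eq_zero hδ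
  have e7 := hs.β_three_mul_add_four (3 * k + 1)
  have e8 := hs.β_three_mul_add_five_eq hδ (3 * k + 1)
  have f8 := hs.α_three_mul_add_five_eq hδ (3 * k + 1)
  have f9 := hs.α_three_mul_add_six (3 * k + 1)
  have e9 := hs.β_three_mul_add_six (3 * k + 1)
  simp only [Nat.mul_add, ← Nat.mul_assoc, Nat.add_assoc, Nat.reduceMul, Nat.reduceAdd]
    at e7 e8 f8 f9 e9
  have h9 := nine_ne_zero_of_three_ne_zero h3
  have hβ7 : β (9 * k + 7) = -3 := by
    rw [e7, hβ6, hβ5]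
    field_simp
    ring
  have hβ8 : β (9 * k + 8) = 3 * δ + 3 := by
    rw [e8, hβ7]
    ring
  have hα8 : α (9 * k + 8) = -(4 * δ + 2) / 3 := by
    rw [f8, hs.α_three_mul_add_three hδ h3 k, hα5, hβ7, hβ8]
    field_simp
    linear_combination 6 * δ * hδ
  refine ⟨hβ7, hβ8, hα8, ?_⟩
  rw [e9, f9, hα8]
  field_simp
  linear_combination (4 + 24 * δ) * hδ

theorem head_succ_of_last_third (hs : IsB2Recurrence (2 * δ ^ 2) δ α β)
    (hδ : δ ^ 2 + δ + 1 = 0) (h3 : (3 : F) ≠ 0) {k : ℕ} (hβ8 : β (9 * k + 8) = 3 * δ + 3)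
    (hα8 : α (9 * k + 8) = -(4 * δ + 2) / 3)
    (hβ9 : β (9 * k + 9) = -δ / 3) (hβ5_ne : β (3 * k + 5) ≠ 0) :
    β (9 * (k + 1) + 1) = β (3 * (k + 1) + 1) ∧ β (9 * (k + 1) + 2) = β (3 * (k + 1) + 2) ∧
      β (9 * (k + 1) + 3) = -δ / 3 ∧ α (9 * (k + 1) + 2) = -(2 * δ + 4) / 3 := by
  have hδ0 := ne_zero_of_sq_add_self_add_one_eq_zero hδ
  have hδ1 := add_one_ne_zero_of_sq_add_self_add_one_eq_zero hδ
  have e10 := hs.β_three_mul_add_four (3 * k + 2)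
  have e11 := hs.β_three_mul_add_five_eq hδ (3 * k + 2)
  have f11 := hs.α_three_mul_add_five_eq hδ (3 * k + 2)
  have f12 := hs.α_three_mul_add_six (3 * k + 2)
  have e12 := hs.β_three_mul_add_six (3 * k + 2)
  simp only [Nat.mul_add, ← Nat.mul_assoc, Nat.add_assoc, Nat.reduceMul, Nat.reduceAdd]
    at e10 e11 f11 f12 e12 ⊢
  have hβ10 : β (9 * k + 10) = β (3 * k + 4) := by
    rw [e10, hβ9, hβ8]
    field_simp
    linear_combination -β (3 * k + 4) * hδ
  have hβ11 : β (9 * k + 11) = β (3 * k + 5) := by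
    rw [e11, hβ10, hs.β_three_mul_add_five_eq hδ k]
  have hα11 : α (9 * k + 11) = -(2 * δ + 4) / 3 := by
    have hβ4 : β (3 * k + 4) = 3 * δ - β (3 * k + 5) := by
      linear_combination hs.β_three_mul_add_five_eq hδ k
    rw [f11, hs.α_three_mul_add_four k, hα8, hβ10, hβ11, hβ4]
    field_simp
    linear_combination (6 * β (3 * k + 5) - 6) * hδ
  refine ⟨hβ10, hβ11, ?_, hα11⟩
  rw [e12, f12, hα11]
  field_simp
  linear_combination (16 + 12 * δ) * hδ

theorem nineBlock_of_head (hs : IsB2Recurrence (2 * δ ^ 2) δ α β) (hδ : δ ^ 2 + δ + 1 = 0)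
    (h3 : (3 : F) ≠ 0) {k : ℕ} (hβ1 : β (9 * k + 1) = β (3 * k + 1))
    (hβ2 : β (9 * k + 2) = β (3 * k + 2)) (hβ3 : β (9 * k + 3) = -δ / 3)
    (hα2 : α (9 * k + 2) = -(2 * δ + 4) / 3) (hβ2_ne : β (3 * k + 2) ≠ 0)
    (hβ3_ne : β (3 * k + 3) ≠ 0) : NineBlock δ α β k :=
  have ⟨hβ4, hβ5, hα5, hβ6⟩ := hs.middle_third_of_head hδ h3 hβ2 hβ2_ne hβ3 hα2
  have ⟨hβ7, hβ8, hα8, hβ9⟩ := hs.last_third_of_middle_third hδ h3 hβ5 hα5 hβ6 hβ3_ne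
  ⟨hβ1, hβ2, hβ3, hα2, hβ4, hβ5, hα5, hβ6, hβ7, hβ8, hα8, hβ9⟩

theorem β_three_mul_add_three_ne_zero (hδ : δ ^ 2 + δ + 1 = 0) (h3 : (3 : F) ≠ 0) {K : ℕ}
    (hK : ∀ m ≤ K, NineBlock δ α β m) (n : ℕ) (hn : n ≤ 3 * K + 2) : β (3 * n + 3) ≠ 0 := by
  have hδ3 : -δ / 3 ≠ 0 :=
    div_ne_zero (neg_ne_zero.2 (ne_zero_of_sq_add_self_add_one_eq_zero hδ)) h3
  induction n using Nat.strong_induction_on with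
  | _ n ih =>
    obtain ⟨q, rfl | rfl | rfl⟩ : ∃ q, n = 3 * q ∨ n = 3 * q + 1 ∨ n = 3 * q + 2 :=
      ⟨n / 3, by omega⟩
    · rw [show 3 * (3 * q) + 3 = 9 * q + 3 by ring, (hK q (by omega)).β_three]
      exact hδ3
    · rw [show 3 * (3 * q + 1) + 3 = 9 * q + 6 by ring, (hK q (by omega)).β_six]
      exact div_ne_zero (ih q (by omega) (by omega)) (nine_ne_zero_of_three_ne_zero h3)
    · rw [show 3 * (3 * q + 2) + 3 = 9 * q + 9 by ring, (hK q (by omega)).β_nine]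
      exact hδ3

theorem β_three_mul_add_four_eq {K : ℕ} (hK : ∀ m ≤ K, NineBlock δ α β m) (n : ℕ)
    (hn : n ≤ 3 * K + 1) : β (3 * n + 4) = -3 / δ ∨ β (3 * n + 4) = -3 := by
  induction n using Nat.strong_induction_on with
  | _ n ih =>
    obtain ⟨q, rfl | rfl | rfl⟩ : ∃ q, n = 3 * q ∨ n = 3 * q + 1 ∨ n = 3 * q + 2 :=
      ⟨n / 3, by omega⟩
    · rw [show 3 * (3 * q) + 4 = 9 * q + 4 by ring]
      exact Or.inl (hK q (by omega)).β_four
    · rw [show 3 * (3 * q + 1) + 4 = 9 * q + 7 by ring]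
      exact Or.inr (hK q (by omega)).β_seven
    · rw [show 3 * (3 * q + 2) + 4 = 9 * (q + 1) + 1 by ring, (hK (q + 1) (by omega)).β_one]
      exact ih q (by omega) (by omega)

theorem β_three_mul_add_five_ne_zero (hs : IsB2Recurrence (2 * δ ^ 2) δ α β)
    (hδ : δ ^ 2 + δ + 1 = 0) (h3 : (3 : F) ≠ 0) {K : ℕ} (hK : ∀ m ≤ K, NineBlock δ α β m) (n : ℕ)
    (hn : n ≤ 3 * K + 1) :
    β (3 * n + 5) ≠ 0 := by
  have hδ0 := ne_zero_of_sq_add_self_add_one_eq_zero hδ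
  rw [hs.β_three_mul_add_five_eq hδ]
  rcases β_three_mul_add_four_eq hK n hn with h | h <;> rw [h]
  · rw [show 3 * δ - -3 / δ = -3 by field_simp; linear_combination hδ]
    exact neg_ne_zero.2 h3
  · rw [show 3 * δ - -3 = 3 * (δ + 1) by ring]
    exact mul_ne_zero h3 (add_one_ne_zero_of_sq_add_self_add_one_eq_zero hδ)

theorem nineBlock (hs : IsB2Recurrence (2 * δ ^ 2) δ α β) (hδ : δ ^ 2 + δ + 1 = 0)
    (h3 : (3 : F) ≠ 0) (k : ℕ) : NineBlock δ α β k := by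
  have hδ0 := ne_zero_of_sq_add_self_add_one_eq_zero hδ
  induction k using Nat.strong_induction_on with
  | _ k ih =>
    cases k with
    | zero =>
      have hβ2 : β 2 ≠ 0 := by
        rw [hs.β_two_eq hδ]
        exact mul_ne_zero h3 hδ0
      have hβ3 : β 3 ≠ 0 := by
        rw [hs.β_three_eq hδ h3]
        exact div_ne_zero (neg_ne_zero.2 hδ0) h3
      exact hs.nineBlock_of_head hδ h3 rfl rfl (hs.β_three_eq hδ h3) (hs.α_two_eq hδ h3) hβ2 hβ3
    | succ k =>
      have hK : ∀ m ≤ k, NineBlock δ α β m := fun m hm => ih m (by omega)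
      have hβ5 := hs.β_three_mul_add_five_ne_zero hδ h3 hK k (by omega)
      have hβ6 := β_three_mul_add_three_ne_zero hδ h3 hK (k + 1) (by omega)
      have hk := hK k le_rfl
      obtain ⟨hβ1, hβ2, hβ3, hα2⟩ :=
        hs.head_succ_of_last_third hδ h3 hk.β_eight hk.α_eight hk.β_nine hβ5
      exact hs.nineBlock_of_head hδ h3 hβ1 hβ2 hβ3 hα2 hβ5 hβ6

end IsB2Recurrence

theorem stmt6 (p : ℕ) [Fact p.Prime] (hgt : 3 < p)
    (δ : ZMod p) (hδ : δ^2 + δ + 1 = 0)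
    (u v : ZMod p) (hu : u = 2*δ^2) (hv : v = δ)
    (α β : ℕ → ZMod p)
    (hα1 : α 1 = -u) (hα2 : α 2 = u * (2*v - 1 - u^2) / (v - u^2))
    (hα3 : α 3 = -u * (v - 1) / (v - u^2))
    (hβ1 : β 1 = 1) (hβ2 : β 2 = u^2 - v)
    (hβ3 : β 3 = (u^2 + u^4 + v^3 - 3*u^2*v) / (v - u^2)^2)
    (hrα4 : ∀ k : ℕ, α (3*k+4) = -u)
    (hrβ4 : ∀ k : ℕ, β (3*k+4) = β (k+2) / (β (3*k+3) * β (3*k+2)))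
    (hrβ5 : ∀ k : ℕ, β (3*k+5) = u^2 - v - β (3*k+4))
    (hrα5 : ∀ k : ℕ, α (3*k+5) = u - (α (k+2) + u*v - α (3*k+2) * β (3*k+4)) / β (3*k+5))
    (hrα6 : ∀ k : ℕ, α (3*k+6) = u - α (3*k+5))
    (hrβ6 : ∀ k : ℕ, β (3*k+6) = v - α (3*k+5) * α (3*k+6)) :
    (∀ k : ℕ, α (3*k+1) = -u ∧ α (3*k+2) + α (3*k+3) = u ∧
      α (9*k+2) = -(2*δ+4)/3 ∧ α (9*k+5) = (u + α (3*k+2))/3 ∧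
      α (9*k+8) = -(4*δ+2)/3) ∧
    β 1 = 1 ∧ β 2 = 3*δ ∧
    (∀ k : ℕ, β (3*k+4) + β (3*k+5) = 3*δ ∧
      β (9*k+1) = β (3*k+1) ∧ β (9*k+4) = -3/δ ∧ β (9*k+7) = -3 ∧
      β (9*k+3) = -δ/3 ∧ β (9*k+6) = β (3*k+3)/9 ∧ β (9*k+9) = -δ/3) := by
  have hs : IsB2Recurrence u v α β :=
    ⟨hα1, hα2, hα3, hβ1, hβ2, hβ3, hrα4, hrβ4, hrβ5, hrα5, hrα6, hrβ6⟩
  subst hu hv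
  have h3 : (3 : ZMod p) ≠ 0 := fun h => by
    simpa [h] using ZMod.val_natCast_of_lt hgt
  have hb := hs.nineBlock hδ h3
  refine ⟨fun k => ⟨hs.α_three_mul_add_one k, ?_, (hb k).α_two, (hb k).α_five, (hb k).α_eight⟩,
    hβ1, hs.β_two_eq hδ, fun k => ⟨?_, (hb k).β_one, (hb k).β_four, (hb k).β_seven,
      (hb k).β_three, (hb k).β_six, (hb k).β_nine⟩⟩
  · rw [hs.α_three_mul_add_three hδ h3 k]
    ring
  · rw [hs.β_three_mul_add_five_eq hδ k]
    ring
end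

section
/- Let p > 3 be prime and δ ∈ ℤ/pℤ with δ² + δ + 1 = 0, u = 2δ², v = δ, and let β be the sequence of the Theorem B2 recurrences. Then for every i ≥ 1, β_i ≠ 0; more precisely, β_{3k+3} = -δ/3^{a(k)} for some integer a(k) ≥ 1 for each k ≥ 0, where every β_{3k+3} equals β_{3j+3}/9 or -δ/3 according to the residue of k, and each β_{3k+1}, β_{3k+2} with k ≥ 1 lies in {-3, -3/δ, 3δ+3, 3δ+3/δ, β_{3j+1}, 3δ-β_{3j+1}}. -/
/-!
With `u = 2δ²` and `v = δ`, where `δ³ = 1`, the recurrences collapse to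
`β (3k+5) = 3δ - β (3k+4)` and `β (3k+3) = w k ^ 2` for the shift `w k = α (3k+2) - δ²`.
One then follows the blocks `3k+1, 3k+2, 3k+3` along the residue of `k` mod 3:
`w (3j) = -(1-δ)/3`, `w (3j+1) = w j / 3` and `w (3j+2) = (1-δ)/3`, while for `k ≥ 1` the
value `β (3k+1)` is `3+3δ`, `-3`, or `β (3(j+1)+1)` respectively. Since `((1-δ)/3)² = -δ/3`,
every `β (3k+3)` is `-δ/3^a`, and every other `β i` is one of `1, 3δ, -3, 3+3δ`; as block `k+1`
only depends on block `k` and block `⌊k/3⌋` or `⌊k/3⌋+1`, all of this follows by strong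
induction on `k`.
-/

variable {F : Type*} [Field F]

structure B2Recurrence_s7 (u v : F) (α β : ℕ → F) : Prop where
  alpha_two : α 2 = u * (2*v - 1 - u^2) / (v - u^2)
  alpha_three : α 3 = -u * (v - 1) / (v - u^2)
  beta_one : β 1 = 1
  beta_two : β 2 = u^2 - v
  beta_three : β 3 = (u^2 + u^4 + v^3 - 3*u^2*v) / (v - u^2)^2
  alpha_three_mul_add_four : ∀ k : ℕ, α (3*k+4) = -u
  beta_three_mul_add_four : ∀ k : ℕ, β (3*k+4) = β (k+2) / (β (3*k+3) * β (3*k+2))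
  beta_three_mul_add_five : ∀ k : ℕ, β (3*k+5) = u^2 - v - β (3*k+4)
  alpha_three_mul_add_five : ∀ k : ℕ,
    α (3*k+5) = u - (α (k+2) + u*v - α (3*k+2) * β (3*k+4)) / β (3*k+5)
  alpha_three_mul_add_six : ∀ k : ℕ, α (3*k+6) = u - α (3*k+5)
  beta_three_mul_add_six : ∀ k : ℕ, β (3*k+6) = v - α (3*k+5) * α (3*k+6)

section CubeRoot

variable {δ : F}

lemma ne_zero_of_sq_add_add_one (hδ : δ^2 + δ + 1 = 0) : δ ≠ 0 := by
  rintro rfl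
  simp at hδ

lemma one_add_ne_zero_of_sq_add_add_one (hδ : δ^2 + δ + 1 = 0) : 1 + δ ≠ 0 := by
  intro h
  have : δ^2 = 0 := by linear_combination hδ - h
  exact ne_zero_of_sq_add_add_one hδ (pow_eq_zero_iff two_ne_zero |>.mp this)

lemma three_add_three_mul_ne_zero (hδ : δ^2 + δ + 1 = 0) (h3 : (3 : F) ≠ 0) :
    3 + 3*δ ≠ 0 := by
  rw [show 3 + 3*δ = 3*(1 + δ) by ring]
  exact mul_ne_zero h3 (one_add_ne_zero_of_sq_add_add_one hδ)

lemma sub_two_mul_sq_sq (hδ : δ^2 + δ + 1 = 0) : δ - (2*δ^2)^2 = -(3*δ) := by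
  linear_combination (4*δ - 4*δ^2) * hδ

lemma one_sub_div_three_sq (hδ : δ^2 + δ + 1 = 0) (h3 : (3 : F) ≠ 0) :
    ((1 - δ)/3)^2 = -δ/3 := by
  field_simp
  linear_combination hδ

end CubeRoot

namespace B2Recurrence_s7

variable {δ : F} {α β : ℕ → F}

lemma beta_two_eq (h : B2Recurrence_s7 (2*δ^2) δ α β) (hδ : δ^2 + δ + 1 = 0) : β 2 = 3*δ := by
  rw [h.beta_two]
  linear_combination (4*δ^2 - 4*δ) * hδ

lemma beta_three_mul_add_five_eq (h : B2Recurrence_s7 (2*δ^2) δ α β) (hδ : δ^2 + δ + 1 = 0)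
    (k : ℕ) : β (3*k+5) = 3*δ - β (3*k+4) := by
  rw [h.beta_three_mul_add_five]
  linear_combination (4*δ^2 - 4*δ) * hδ

lemma alpha_two_sub (h : B2Recurrence_s7 (2*δ^2) δ α β) (hδ : δ^2 + δ + 1 = 0)
    (h3 : (3 : F) ≠ 0) : α 2 - δ^2 = -((1-δ)/3) := by
  have hδ0 := ne_zero_of_sq_add_add_one hδ
  rw [h.alpha_two, sub_two_mul_sq_sq hδ]
  field_simp
  linear_combination (1 + 8*δ^2*(δ-1)) * hδ

lemma alpha_three_mul_add_three (h : B2Recurrence_s7 (2*δ^2) δ α β) (hδ : δ^2 + δ + 1 = 0)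
    (h3 : (3 : F) ≠ 0) (k : ℕ) : α (3*k+3) = 2*δ^2 - α (3*k+2) := by
  rcases k with _ | k
  · have hδ0 := ne_zero_of_sq_add_add_one hδ
    rw [h.alpha_three, h.alpha_two, sub_two_mul_sq_sq hδ]
    field_simp
    linear_combination 8*δ*(δ-1) * hδ
  · exact h.alpha_three_mul_add_six k

lemma beta_three_mul_add_three (h : B2Recurrence_s7 (2*δ^2) δ α β) (hδ : δ^2 + δ + 1 = 0)
    (h3 : (3 : F) ≠ 0) (k : ℕ) : β (3*k+3) = (α (3*k+2) - δ^2)^2 := by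
  rcases k with _ | k
  · have hδ0 := ne_zero_of_sq_add_add_one hδ
    rw [h.beta_three, h.alpha_two_sub hδ h3, neg_sq, one_sub_div_three_sq hδ h3,
      sub_two_mul_sq_sq hδ]
    field_simp
    linear_combination (4 - 16*δ^2 + 16*δ^3) * hδ
  · rw [show 3*(k+1)+3 = 3*k+6 by ring, show 3*(k+1)+2 = 3*k+5 by ring,
      h.beta_three_mul_add_six, h.alpha_three_mul_add_six]
    linear_combination (δ - δ^2) * hδ

lemma next_of_shift_eq_neg (h : B2Recurrence_s7 (2*δ^2) δ α β) (hδ : δ^2 + δ + 1 = 0)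
    (h3 : (3 : F) ≠ 0) (n : ℕ) (hw : α (3*n+2) - δ^2 = -((1-δ)/3))
    (hβ : β (3*n+2) = β (n+2)) (hβ0 : β (n+2) ≠ 0) :
    β (3*(n+1)+1) = 3 + 3*δ ∧ α (3*(n+1)+2) - δ^2 = (α (n+2) - δ^2)/3 := by
  simp only [show 3*(n+1)+1 = 3*n+4 by ring, show 3*(n+1)+2 = 3*n+5 by ring]
  have hδ0 := ne_zero_of_sq_add_add_one hδ
  have hβ3 : β (3*n+3) = -δ/3 := by
    rw [h.beta_three_mul_add_three hδ h3, hw, neg_sq, one_sub_div_three_sq hδ h3]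
  have h4 : β (3*n+4) = 3 + 3*δ := by
    rw [h.beta_three_mul_add_four, hβ3, hβ]
    field_simp
    linear_combination -hδ
  have h5 : β (3*n+5) = -3 := by
    rw [h.beta_three_mul_add_five_eq hδ, h4]
    ring
  refine ⟨h4, ?_⟩
  rw [h.alpha_three_mul_add_five, show α (3*n+2) = δ^2 - (1-δ)/3 by linear_combination hw,
    h4, h5]
  field_simp
  linear_combination (1 - δ) * hδ

lemma next_of_shift_eq_div_three (h : B2Recurrence_s7 (2*δ^2) δ α β) (hδ : δ^2 + δ + 1 = 0)
    (h3 : (3 : F) ≠ 0) (n : ℕ) {w : F} (hw0 : w ≠ 0) (hw : α (3*n+2) - δ^2 = w/3)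
    (hβ : β (3*n+2) = -3) (hβn : β (n+2) = w^2) (hαn : α (n+2) = δ^2 - w) :
    β (3*(n+1)+1) = -3 ∧ α (3*(n+1)+2) - δ^2 = (1-δ)/3 := by
  simp only [show 3*(n+1)+1 = 3*n+4 by ring, show 3*(n+1)+2 = 3*n+5 by ring]
  have hβ3 : β (3*n+3) = w^2/9 := by
    rw [h.beta_three_mul_add_three hδ h3, hw, div_pow]
    norm_num
  have h4 : β (3*n+4) = -3 := by
    rw [h.beta_three_mul_add_four, hβ3, hβ, hβn]
    field_simp
    ring
  have h5 : β (3*n+5) = 3 + 3*δ := by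
    rw [h.beta_three_mul_add_five_eq hδ, h4]
    ring
  have h1δ := one_add_ne_zero_of_sq_add_add_one hδ
  refine ⟨h4, ?_⟩
  rw [h.alpha_three_mul_add_five, show α (3*n+2) = δ^2 + w/3 by linear_combination hw,
    h4, h5, hαn]
  field_simp
  linear_combination (δ - 1) * hδ

lemma next_of_shift_eq (h : B2Recurrence_s7 (2*δ^2) δ α β) (hδ : δ^2 + δ + 1 = 0)
    (h3 : (3 : F) ≠ 0) (n : ℕ) (hw : α (3*n+2) - δ^2 = (1-δ)/3)
    (hβ : β (3*n+2) = 3 + 3*δ) (hβn : β (n+2) = -3 ∨ β (n+2) = 3 + 3*δ)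
    (hαn : α (n+2) = -(2*δ^2)) :
    β (3*(n+1)+1) = β (n+2) ∧ α (3*(n+1)+2) - δ^2 = -((1-δ)/3) := by
  simp only [show 3*(n+1)+1 = 3*n+4 by ring, show 3*(n+1)+2 = 3*n+5 by ring]
  have hδ0 := ne_zero_of_sq_add_add_one hδ
  have h1δ := one_add_ne_zero_of_sq_add_add_one hδ
  have hβ3 : β (3*n+3) = -δ/3 := by
    rw [h.beta_three_mul_add_three hδ h3, hw, one_sub_div_three_sq hδ h3]
  have h4 : β (3*n+4) = β (n+2) := by
    rw [h.beta_three_mul_add_four, hβ3, hβ]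
    field_simp
    linear_combination -β (n+2) * hδ
  refine ⟨h4, ?_⟩
  rw [h.alpha_three_mul_add_five, show α (3*n+2) = δ^2 + (1-δ)/3 by linear_combination hw,
    h.beta_three_mul_add_five_eq hδ, h4, hαn]
  rcases hβn with hβn | hβn <;> rw [hβn]
  · rw [show 3*δ - -3 = 3*(1+δ) by ring]
    field_simp
    linear_combination δ * hδ
  · field_simp
    linear_combination δ * hδ

structure BlockInvariant (δ : F) (α β : ℕ → F) (k : ℕ) : Prop where
  shift_sq : ∃ a, 1 ≤ a ∧ (α (3*k+2) - δ^2)^2 = -δ/3^a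
  beta_mem : 1 ≤ k → β (3*k+1) = -3 ∨ β (3*k+1) = 3 + 3*δ
  of_eq_three_mul : ∀ j, k = 3*j → α (3*k+2) - δ^2 = -((1-δ)/3) ∧ β (3*k+2) = β (k+2)
  of_eq_three_mul_add_one : ∀ j, k = 3*j+1 →
    α (3*k+2) - δ^2 = (α (3*j+2) - δ^2)/3 ∧ β (3*k+1) = 3 + 3*δ
  of_eq_three_mul_add_two : ∀ j, k = 3*j+2 → α (3*k+2) - δ^2 = (1-δ)/3 ∧ β (3*k+1) = -3

lemma BlockInvariant.shift_ne_zero {k : ℕ} (hI : BlockInvariant δ α β k)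
    (hδ : δ^2 + δ + 1 = 0) (h3 : (3 : F) ≠ 0) : α (3*k+2) - δ^2 ≠ 0 := by
  obtain ⟨a, -, ha⟩ := hI.shift_sq
  intro h0
  rw [h0, zero_pow two_ne_zero, eq_comm, div_eq_zero_iff, neg_eq_zero] at ha
  exact ha.elim (ne_zero_of_sq_add_add_one hδ) (pow_ne_zero a h3)

lemma beta_three_mul_add_two_eq (h : B2Recurrence_s7 (2*δ^2) δ α β) (hδ : δ^2 + δ + 1 = 0)
    {k : ℕ} (hk : 1 ≤ k) : β (3*k+2) = 3*δ - β (3*k+1) := by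
  obtain ⟨m, rfl⟩ : ∃ m, k = m + 1 := ⟨k - 1, by omega⟩
  exact h.beta_three_mul_add_five_eq hδ m

lemma beta_three_mul_add_one_ne_zero (h : B2Recurrence_s7 (2*δ^2) δ α β)
    (hδ : δ^2 + δ + 1 = 0) (h3 : (3 : F) ≠ 0) {k : ℕ} (hI : BlockInvariant δ α β k) :
    β (3*k+1) ≠ 0 := by
  rcases Nat.eq_zero_or_pos k with rfl | hk
  · simp [h.beta_one]
  · rcases hI.beta_mem hk with hβ | hβ <;> rw [hβ]
    · exact neg_ne_zero.mpr h3
    · exact three_add_three_mul_ne_zero hδ h3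

lemma beta_three_mul_add_two_ne_zero (h : B2Recurrence_s7 (2*δ^2) δ α β)
    (hδ : δ^2 + δ + 1 = 0) (h3 : (3 : F) ≠ 0) {k : ℕ} (hI : BlockInvariant δ α β k) :
    β (3*k+2) ≠ 0 := by
  rcases Nat.eq_zero_or_pos k with rfl | hk
  · rw [h.beta_two_eq hδ]
    exact mul_ne_zero h3 (ne_zero_of_sq_add_add_one hδ)
  · rw [h.beta_three_mul_add_two_eq hδ hk]
    rcases hI.beta_mem hk with hβ | hβ <;> rw [hβ]
    · rw [show 3*δ - -3 = 3 + 3*δ by ring]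
      exact three_add_three_mul_ne_zero hδ h3
    · simpa using h3

lemma blockInvariant_zero (h : B2Recurrence_s7 (2*δ^2) δ α β) (hδ : δ^2 + δ + 1 = 0)
    (h3 : (3 : F) ≠ 0) : BlockInvariant δ α β 0 := by
  have hα2 := h.alpha_two_sub hδ h3
  refine ⟨⟨1, le_rfl, ?_⟩, by omega, fun _ _ => ⟨hα2, rfl⟩, fun _ _ => by omega,
    fun _ _ => by omega⟩
  rw [hα2, neg_sq, one_sub_div_three_sq hδ h3, pow_one]

lemma blockInvariant_three_mul_add_one (h : B2Recurrence_s7 (2*δ^2) δ α β)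
    (hδ : δ^2 + δ + 1 = 0) (h3 : (3 : F) ≠ 0) {j : ℕ}
    (hprev : BlockInvariant δ α β (3*j)) (hj : BlockInvariant δ α β j) :
    BlockInvariant δ α β (3*j+1) := by
  obtain ⟨hw, hβ⟩ := hprev.of_eq_three_mul j rfl
  obtain ⟨hβ4, hα5⟩ := h.next_of_shift_eq_neg hδ h3 (3*j) hw hβ
    (h.beta_three_mul_add_two_ne_zero hδ h3 hj)
  obtain ⟨a, ha, hsq⟩ := hj.shift_sq
  refine ⟨⟨a+2, by omega, ?_⟩, fun _ => Or.inr hβ4, fun _ _ => by omega, fun j' hj' => ?_,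
    fun _ _ => by omega⟩
  · rw [hα5, div_pow, hsq]
    field_simp
    ring
  · obtain rfl : j' = j := by omega
    exact ⟨hα5, hβ4⟩

lemma blockInvariant_three_mul_add_two (h : B2Recurrence_s7 (2*δ^2) δ α β)
    (hδ : δ^2 + δ + 1 = 0) (h3 : (3 : F) ≠ 0) {j : ℕ}
    (hprev : BlockInvariant δ α β (3*j+1)) (hj : BlockInvariant δ α β j) :
    BlockInvariant δ α β (3*j+2) := by
  obtain ⟨hw, hβ1⟩ := hprev.of_eq_three_mul_add_one j rfl
  have hβ2 : β (3*(3*j+1)+2) = -3 := by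
    rw [h.beta_three_mul_add_two_eq hδ (by omega), hβ1]
    ring
  obtain ⟨hβ4, hα5⟩ := h.next_of_shift_eq_div_three hδ h3 (3*j+1)
    (hj.shift_ne_zero hδ h3) hw hβ2 (h.beta_three_mul_add_three hδ h3 j)
    (by rw [show 3*j+1+2 = 3*j+3 by ring, h.alpha_three_mul_add_three hδ h3]; ring)
  refine ⟨⟨1, le_rfl, ?_⟩, fun _ => Or.inl hβ4, fun _ _ => by omega, fun _ _ => by omega,
    fun _ _ => ⟨hα5, hβ4⟩⟩
  rw [hα5, one_sub_div_three_sq hδ h3, pow_one]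

lemma blockInvariant_three_mul_add_three (h : B2Recurrence_s7 (2*δ^2) δ α β)
    (hδ : δ^2 + δ + 1 = 0) (h3 : (3 : F) ≠ 0) {j : ℕ}
    (hprev : BlockInvariant δ α β (3*j+2)) (hj : BlockInvariant δ α β (j+1)) :
    BlockInvariant δ α β (3*j+3) := by
  obtain ⟨hw, hβ1⟩ := hprev.of_eq_three_mul_add_two j rfl
  have hβ2 : β (3*(3*j+2)+2) = 3 + 3*δ := by
    rw [h.beta_three_mul_add_two_eq hδ (by omega), hβ1]
    ring
  obtain ⟨hβ4, hα5⟩ := h.next_of_shift_eq hδ h3 (3*j+2) hw hβ2 (hj.beta_mem (by omega))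
    (h.alpha_three_mul_add_four j)
  refine ⟨⟨1, le_rfl, ?_⟩, fun _ => by rw [hβ4]; exact hj.beta_mem (by omega),
    fun j' hj' => ⟨hα5, ?_⟩, fun _ _ => by omega, fun _ _ => by omega⟩
  · rw [hα5, neg_sq, one_sub_div_three_sq hδ h3, pow_one]
  · rw [h.beta_three_mul_add_two_eq hδ (by omega), hβ4, show 3*j+2+2 = 3*(j+1)+1 by ring,
      show 3*j+3+2 = 3*(j+1)+2 by ring, h.beta_three_mul_add_two_eq hδ (by omega)]

lemma blockInvariant (h : B2Recurrence_s7 (2*δ^2) δ α β) (hδ : δ^2 + δ + 1 = 0)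
    (h3 : (3 : F) ≠ 0) (k : ℕ) : BlockInvariant δ α β k := by
  induction k using Nat.strong_induction_on with
  | _ k ih =>
    obtain rfl | ⟨j, rfl | rfl | rfl⟩ :
        k = 0 ∨ ∃ j, k = 3*j+1 ∨ k = 3*j+2 ∨ k = 3*j+3 :=
      (Nat.eq_zero_or_pos k).imp_right fun hk => ⟨(k-1)/3, by omega⟩
    · exact blockInvariant_zero h hδ h3
    · exact blockInvariant_three_mul_add_one h hδ h3 (ih _ (by omega)) (ih _ (by omega))
    · exact blockInvariant_three_mul_add_two h hδ h3 (ih _ (by omega)) (ih _ (by omega))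
    · exact blockInvariant_three_mul_add_three h hδ h3 (ih _ (by omega)) (ih _ (by omega))

lemma beta_ne_zero_s7 (h : B2Recurrence_s7 (2*δ^2) δ α β) (hδ : δ^2 + δ + 1 = 0)
    (h3 : (3 : F) ≠ 0) {i : ℕ} (hi : 1 ≤ i) : β i ≠ 0 := by
  obtain ⟨k, rfl | rfl | rfl⟩ : ∃ k, i = 3*k+1 ∨ i = 3*k+2 ∨ i = 3*k+3 :=
    ⟨(i-1)/3, by omega⟩
  · exact h.beta_three_mul_add_one_ne_zero hδ h3 (h.blockInvariant hδ h3 k)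
  · exact h.beta_three_mul_add_two_ne_zero hδ h3 (h.blockInvariant hδ h3 k)
  · rw [h.beta_three_mul_add_three hδ h3]
    exact pow_ne_zero 2 ((h.blockInvariant hδ h3 k).shift_ne_zero hδ h3)

lemma exists_beta_three_mul_add_three_eq (h : B2Recurrence_s7 (2*δ^2) δ α β)
    (hδ : δ^2 + δ + 1 = 0) (h3 : (3 : F) ≠ 0) (k : ℕ) :
    ∃ a, 1 ≤ a ∧ β (3*k+3) = -δ/3^a := by
  rw [h.beta_three_mul_add_three hδ h3]
  exact (h.blockInvariant hδ h3 k).shift_sq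

lemma beta_three_mul_add_three_eq_or (h : B2Recurrence_s7 (2*δ^2) δ α β)
    (hδ : δ^2 + δ + 1 = 0) (h3 : (3 : F) ≠ 0) (k : ℕ) :
    β (3*k+3) = -δ/3 ∨ ∃ j, β (3*k+3) = β (3*j+3)/9 := by
  have hI := h.blockInvariant hδ h3 k
  simp only [h.beta_three_mul_add_three hδ h3]
  obtain ⟨j, rfl | rfl | rfl⟩ : ∃ j, k = 3*j ∨ k = 3*j+1 ∨ k = 3*j+2 :=
    ⟨k/3, by omega⟩
  · left
    rw [(hI.of_eq_three_mul j rfl).1, neg_sq, one_sub_div_three_sq hδ h3]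
  · right
    refine ⟨j, ?_⟩
    rw [(hI.of_eq_three_mul_add_one j rfl).1, div_pow]
    norm_num
  · left
    rw [(hI.of_eq_three_mul_add_two j rfl).1, one_sub_div_three_sq hδ h3]

lemma beta_three_mul_add_one_mem (h : B2Recurrence_s7 (2*δ^2) δ α β) (hδ : δ^2 + δ + 1 = 0)
    (h3 : (3 : F) ≠ 0) {k : ℕ} (hk : 1 ≤ k) :
    β (3*k+1) = -3 ∨ β (3*k+1) = 3 + 3*δ :=
  (h.blockInvariant hδ h3 k).beta_mem hk

lemma beta_three_mul_add_two_mem (h : B2Recurrence_s7 (2*δ^2) δ α β) (hδ : δ^2 + δ + 1 = 0)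
    (h3 : (3 : F) ≠ 0) {k : ℕ} (hk : 1 ≤ k) :
    β (3*k+2) = -3 ∨ β (3*k+2) = 3 + 3*δ := by
  rw [h.beta_three_mul_add_two_eq hδ hk]
  rcases h.beta_three_mul_add_one_mem hδ h3 hk with hβ | hβ <;> rw [hβ]
  · exact .inr (by ring)
  · exact .inl (by ring)

end B2Recurrence_s7

theorem stmt7_general (p : ℕ) [Fact p.Prime] (hgt : 3 < p)
    (δ : ZMod p) (hδ : δ^2 + δ + 1 = 0)
    (u v : ZMod p) (hu : u = 2*δ^2) (hv : v = δ)
    (α β : ℕ → ZMod p)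
    (hα2 : α 2 = u * (2*v - 1 - u^2) / (v - u^2))
    (hα3 : α 3 = -u * (v - 1) / (v - u^2))
    (hβ1 : β 1 = 1) (hβ2 : β 2 = u^2 - v)
    (hβ3 : β 3 = (u^2 + u^4 + v^3 - 3*u^2*v) / (v - u^2)^2)
    (hrα4 : ∀ k : ℕ, α (3*k+4) = -u)
    (hrβ4 : ∀ k : ℕ, β (3*k+4) = β (k+2) / (β (3*k+3) * β (3*k+2)))
    (hrβ5 : ∀ k : ℕ, β (3*k+5) = u^2 - v - β (3*k+4))
    (hrα5 : ∀ k : ℕ, α (3*k+5) = u - (α (k+2) + u*v - α (3*k+2) * β (3*k+4)) / β (3*k+5))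
    (hrα6 : ∀ k : ℕ, α (3*k+6) = u - α (3*k+5))
    (hrβ6 : ∀ k : ℕ, β (3*k+6) = v - α (3*k+5) * α (3*k+6)) :
    (∀ i : ℕ, 1 ≤ i → β i ≠ 0) ∧
    (∀ k : ℕ, ∃ a : ℕ, 1 ≤ a ∧ β (3*k+3) = -δ / 3^a) ∧
    (∀ k : ℕ, β (3*k+3) = -δ/3 ∨ ∃ j : ℕ, β (3*k+3) = β (3*j+3) / 9) ∧
    (∀ k : ℕ, 1 ≤ k →
      (β (3*k+1) ∈ ({-3, -3/δ, 3*δ+3, 3*δ+3/δ} : Set (ZMod p)) ∨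
        ∃ j : ℕ, β (3*k+1) = β (3*j+1) ∨ β (3*k+1) = 3*δ - β (3*j+1)) ∧
      (β (3*k+2) ∈ ({-3, -3/δ, 3*δ+3, 3*δ+3/δ} : Set (ZMod p)) ∨
        ∃ j : ℕ, β (3*k+2) = β (3*j+1) ∨ β (3*k+2) = 3*δ - β (3*j+1))) := by
  subst u v
  have h3 : (3 : ZMod p) ≠ 0 := by
    exact_mod_cast (ZMod.natCast_eq_zero_iff 3 p).not.mpr fun hp => by
      have := Nat.le_of_dvd three_pos hp
      omega
  have h : B2Recurrence_s7 (2*δ^2) δ α β :=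
    ⟨hα2, hα3, hβ1, hβ2, hβ3, hrα4, hrβ4, hrβ5, hrα5, hrα6, hrβ6⟩
  have hmem : ∀ x, x = -3 ∨ x = 3 + 3*δ →
      x ∈ ({-3, -3/δ, 3*δ+3, 3*δ+3/δ} : Set (ZMod p)) := by
    rintro x (rfl | rfl)
    · exact Set.mem_insert _ _
    · simp [add_comm]
  exact ⟨fun i hi => h.beta_ne_zero_s7 hδ h3 hi, h.exists_beta_three_mul_add_three_eq hδ h3,
    h.beta_three_mul_add_three_eq_or hδ h3, fun k hk =>
      ⟨.inl (hmem _ (h.beta_three_mul_add_one_mem hδ h3 hk)),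
        .inl (hmem _ (h.beta_three_mul_add_two_mem hδ h3 hk))⟩⟩

theorem stmt7 (p : ℕ) [Fact p.Prime] (hgt : 3 < p)
    (δ : ZMod p) (hδ : δ^2 + δ + 1 = 0)
    (u v : ZMod p) (hu : u = 2*δ^2) (hv : v = δ)
    (α β : ℕ → ZMod p)
    (hα1 : α 1 = -u) (hα2 : α 2 = u * (2*v - 1 - u^2) / (v - u^2))
    (hα3 : α 3 = -u * (v - 1) / (v - u^2))
    (hβ1 : β 1 = 1) (hβ2 : β 2 = u^2 - v)
    (hβ3 : β 3 = (u^2 + u^4 + v^3 - 3*u^2*v) / (v - u^2)^2)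
    (hrα4 : ∀ k : ℕ, α (3*k+4) = -u)
    (hrβ4 : ∀ k : ℕ, β (3*k+4) = β (k+2) / (β (3*k+3) * β (3*k+2)))
    (hrβ5 : ∀ k : ℕ, β (3*k+5) = u^2 - v - β (3*k+4))
    (hrα5 : ∀ k : ℕ, α (3*k+5) = u - (α (k+2) + u*v - α (3*k+2) * β (3*k+4)) / β (3*k+5))
    (hrα6 : ∀ k : ℕ, α (3*k+6) = u - α (3*k+5))
    (hrβ6 : ∀ k : ℕ, β (3*k+6) = v - α (3*k+5) * α (3*k+6)) :
    (∀ i : ℕ, 1 ≤ i → β i ≠ 0) ∧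
    (∀ k : ℕ, ∃ a : ℕ, 1 ≤ a ∧ β (3*k+3) = -δ / 3^a) ∧
    (∀ k : ℕ, β (3*k+3) = -δ/3 ∨ ∃ j : ℕ, β (3*k+3) = β (3*j+3) / 9) ∧
    (∀ k : ℕ, 1 ≤ k →
      (β (3*k+1) ∈ ({-3, -3/δ, 3*δ+3, 3*δ+3/δ} : Set (ZMod p)) ∨
        ∃ j : ℕ, β (3*k+1) = β (3*j+1) ∨ β (3*k+1) = 3*δ - β (3*j+1)) ∧
      (β (3*k+2) ∈ ({-3, -3/δ, 3*δ+3, 3*δ+3/δ} : Set (ZMod p)) ∨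
        ∃ j : ℕ, β (3*k+2) = β (3*j+1) ∨ β (3*k+2) = 3*δ - β (3*j+1))) :=
  stmt7_general p hgt δ hδ u v hu hv α β hα2 hα3 hβ1 hβ2 hβ3 hrα4 hrβ4 hrβ5 hrα5 hrα6 hrβ6
end

section
/- Let p be an odd prime and u, v ∈ ℤ/pℤ with u² = 3, v = 1, and let α be the sequence from the Theorem B2 recurrences. Then for every k ≥ 0, the pair (α_{3k+2}, α_{3k+3}) equals either (0, u) or (u, 0) in ℤ/pℤ; consequently α_{3k+2}·α_{3k+3} = 0 and β_{3k+3} = v - α_{3k+2}α_{3k+3} = 1 for all k ≥ 0. -/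
theorem stmt13 (p : ℕ) [Fact p.Prime] (hodd : p ≠ 2)
    (u v : ZMod p) (hu : u^2 = 3) (hv : v = 1)
    (α β : ℕ → ZMod p)
    (hα1 : α 1 = -u) (hα2 : α 2 = u * (2*v - 1 - u^2) / (v - u^2))
    (hα3 : α 3 = -u * (v - 1) / (v - u^2))
    (hβ1 : β 1 = 1) (hβ2 : β 2 = u^2 - v)
    (hβ3 : β 3 = (u^2 + u^4 + v^3 - 3*u^2*v) / (v - u^2)^2)
    (hrα4 : ∀ k : ℕ, α (3*k+4) = -u)
    (hrβ4 : ∀ k : ℕ, β (3*k+4) = β (k+2) / (β (3*k+3) * β (3*k+2)))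
    (hrβ5 : ∀ k : ℕ, β (3*k+5) = u^2 - v - β (3*k+4))
    (hrα5 : ∀ k : ℕ, α (3*k+5) = u - (α (k+2) + u*v - α (3*k+2) * β (3*k+4)) / β (3*k+5))
    (hrα6 : ∀ k : ℕ, α (3*k+6) = u - α (3*k+5))
    (hrβ6 : ∀ k : ℕ, β (3*k+6) = v - α (3*k+5) * α (3*k+6)) :
    ∀ k : ℕ, ((α (3*k+2) = 0 ∧ α (3*k+3) = u) ∨ (α (3*k+2) = u ∧ α (3*k+3) = 0)) ∧
      α (3*k+2) * α (3*k+3) = 0 ∧ β (3*k+3) = 1 := by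
  have hp : p.Prime := Fact.out
  have h2 : (2 : ZMod p) ≠ 0 := by
    intro h
    have h' : ((2:ℕ):ZMod p) = 0 := by exact_mod_cast h
    rw [CharP.cast_eq_zero_iff (ZMod p) p] at h'
    exact hodd ((Nat.prime_dvd_prime_iff_eq hp Nat.prime_two).mp h')
  have hne2 : (-2 : ZMod p) ≠ 0 := neg_ne_zero.mpr h2
  have h4 : (4 : ZMod p) ≠ 0 := by
    have h44 : (4:ZMod p) = 2*2 := by norm_num
    rw [h44]; exact mul_ne_zero h2 h2
  have ha2 : α 2 = u := by
    rw [hα2, hv, hu, show u * (2*(1:ZMod p) - 1 - 3) = u * -2 by ring,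
      show ((1:ZMod p) - 3) = -2 by ring, mul_div_assoc, div_self hne2, mul_one]
  have ha3 : α 3 = 0 := by rw [hα3, hv]; simp
  have hb2 : β 2 = 2 := by rw [hβ2, hu, hv]; norm_num
  have hb3 : β 3 = 1 := by
    rw [hβ3, hv, show u^4 = (u^2)^2 by ring, hu,
      show ((3:ZMod p) + 3^2 + 1^3 - 3*3*1) = 4 by norm_num,
      show ((1:ZMod p) - 3)^2 = 4 by norm_num]
    exact div_self h4
  have htri : ∀ m : ℕ, ∃ j, m = 3*j ∨ m = 3*j+1 ∨ m = 3*j+2 := fun m => ⟨m/3, by omega⟩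
  have key : ∀ k : ℕ,
      ((α (3*k+2) = 0 ∧ α (3*k+3) = u) ∨ (α (3*k+2) = u ∧ α (3*k+3) = 0)) ∧
      β (3*k+3) = 1 ∧ β (3*k+4) = 1 ∧ β (3*k+5) = 1 ∧
      (α (3*k+2) = u ↔ (α (k+2) = u ∨ (α (k+2) = 0 ∧ α (k+3) = u))) := by
    intro k
    induction k using Nat.strong_induction_on with
    | _ k IH =>
      rcases k with _ | k
      · -- base case k = 0
        simp only [show 3*0+2 = 2 from by norm_num, show 3*0+3 = 3 from by norm_num,
          show 3*0+4 = 4 from by norm_num, show 3*0+5 = 5 from by norm_num,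
          show 0+2 = 2 from rfl, show 0+3 = 3 from rfl]
        have hb4 : β 4 = 1 := by
          have h40 := hrβ4 0
          norm_num at h40
          rw [hb2, hb3, one_mul, div_self h2] at h40
          exact h40
        have hb5 : β 5 = 1 := by
          have h50 := hrβ5 0
          norm_num at h50
          rw [hu, hv, hb4] at h50
          rw [h50]; norm_num
        refine ⟨Or.inr ⟨ha2, ha3⟩, hb3, hb4, hb5, ?_⟩
        exact iff_of_true ha2 (Or.inl ha2)
      · -- step: from k to k+1
        have hk1 : k < k + 1 := Nat.lt_succ_self k
        obtain ⟨hpair, hb3k3, hb3k4, hb3k5, hD⟩ := IH k hk1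
        -- value of β (k+3)
        have hbk3 : β (k+3) = 1 := by
          obtain ⟨j, hj | hj | hj⟩ := htri k
          · have h := (IH j (by omega)).2.1
            rwa [show 3*j+3 = k+3 by omega] at h
          · have h := (IH j (by omega)).2.2.1
            rwa [show 3*j+4 = k+3 by omega] at h
          · have h := (IH j (by omega)).2.2.2.1
            rwa [show 3*j+5 = k+3 by omega] at h
        have ha5 : α (3*k+5) = α (3*k+2) - α (k+2) := by
          rw [hrα5 k, hb3k4, hb3k5, hv, mul_one, mul_one, div_one]; ring
        have ha6 : α (3*k+6) = u - α (3*k+5) := hrα6 k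
        -- main case analysis
        have main : ((α (3*k+5) = 0 ∧ α (3*k+6) = u) ∨ (α (3*k+5) = u ∧ α (3*k+6) = 0)) ∧
            (α (3*k+5) = u ↔ (α (k+3) = u ∨ (α (k+3) = 0 ∧ α (k+4) = u))) := by
          by_cases hu0 : u = 0
          · -- degenerate case u = 0 (p = 3): everything vanishes
            have hz : ∀ m : ℕ, m ≤ k + 2 → α (m+2) = 0 := by
              intro m hm
              obtain ⟨j, hj | hj | hj⟩ := htri m
              · have h := (IH j (by omega)).1
                rw [show 3*j+2 = m+2 by omega] at h
                rcases h with ⟨h1, _⟩ | ⟨h1, _⟩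
                · exact h1
                · rw [h1, hu0]
              · have h := (IH j (by omega)).1
                rw [show 3*j+3 = m+2 by omega] at h
                rcases h with ⟨_, h1⟩ | ⟨_, h1⟩
                · rw [h1, hu0]
                · exact h1
              · rw [show m+2 = 3*j+4 by omega, hrα4 j, hu0, neg_zero]
            have e2 : α (k+2) = 0 := hz k (by omega)
            have e3 : α (k+3) = 0 := hz (k+1) (by omega)
            have e2' : α (3*k+2) = 0 := by
              rcases hpair with ⟨h1, _⟩ | ⟨h1, _⟩
              · exact h1
              · rw [h1, hu0]
            have e5 : α (3*k+5) = 0 := by rw [ha5, e2, e2']; ring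
            have e6 : α (3*k+6) = 0 := by rw [ha6, e5, hu0]; ring
            refine ⟨Or.inl ⟨e5, by rw [e6, hu0]⟩, iff_of_true (by rw [e5, hu0]) (Or.inl (by rw [e3, hu0]))⟩
          · -- u ≠ 0
            have hnn : -u ≠ u := by
              intro h
              apply hu0
              have h2u : 2 * u = 0 := by linear_combination -h
              rcases mul_eq_zero.mp h2u with h' | h'
              · exact absurd h' h2
              · exact h'
            have hnz : -u ≠ 0 := neg_ne_zero.mpr hu0
            have h0u : (0 : ZMod p) ≠ u := fun h => hu0 h.symm
            obtain ⟨j, hj | hj | hj⟩ := htri k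
            · -- k = 3j
              have hpj := (IH j (by omega)).1
              have ek2 : α (k+2) = α (3*j+2) := by rw [show k+2 = 3*j+2 by omega]
              have ek3 : α (k+3) = α (3*j+3) := by rw [show k+3 = 3*j+3 by omega]
              have ek4 : α (k+4) = -u := by
                rw [show k+4 = 3*j+4 by omega]; exact hrα4 j
              rcases hpj with ⟨h1, h2'⟩ | ⟨h1, h2'⟩
              · -- α(k+2)=0, α(k+3)=u
                have hc2 : α (3*k+2) = u := hD.mpr (Or.inr ⟨by rw [ek2, h1], by rw [ek3, h2']⟩)
                have e5 : α (3*k+5) = u := by rw [ha5, hc2, ek2, h1]; ring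
                refine ⟨Or.inr ⟨e5, by rw [ha6, e5]; ring⟩,
                  iff_of_true e5 (Or.inl (by rw [ek3, h2']))⟩
              · -- α(k+2)=u, α(k+3)=0
                have hc2 : α (3*k+2) = u := hD.mpr (Or.inl (by rw [ek2, h1]))
                have e5 : α (3*k+5) = 0 := by rw [ha5, hc2, ek2, h1]; ring
                refine ⟨Or.inl ⟨e5, by rw [ha6, e5]; ring⟩, iff_of_false (by rw [e5]; exact h0u) ?_⟩
                rintro (h | ⟨_, h⟩)
                · rw [ek3, h2'] at h; exact h0u h
                · rw [ek4] at h; exact hnn h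
            · -- k = 3j+1
              have hpj := (IH j (by omega)).1
              have ek2 : α (k+2) = α (3*j+3) := by rw [show k+2 = 3*j+3 by omega]
              have ek3 : α (k+3) = -u := by
                rw [show k+3 = 3*j+4 by omega]; exact hrα4 j
              have hfalse : ¬ (α (k+3) = u ∨ (α (k+3) = 0 ∧ α (k+4) = u)) := by
                rintro (h | ⟨h, _⟩)
                · rw [ek3] at h; exact hnn h
                · rw [ek3] at h; exact hnz h
              rcases hpj with ⟨h1, h2'⟩ | ⟨h1, h2'⟩
              · -- α(3j+3)=u so α(k+2)=u
                have hc2 : α (3*k+2) = u := hD.mpr (Or.inl (by rw [ek2, h2']))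
                have e5 : α (3*k+5) = 0 := by rw [ha5, hc2, ek2, h2']; ring
                exact ⟨Or.inl ⟨e5, by rw [ha6, e5]; ring⟩,
                  iff_of_false (by rw [e5]; exact h0u) hfalse⟩
              · -- α(3j+3)=0 so α(k+2)=0
                have hc2 : α (3*k+2) = 0 := by
                  rcases hpair with ⟨h, _⟩ | ⟨h, _⟩
                  · exact h
                  · exfalso
                    rcases hD.mp h with h' | ⟨h', h''⟩
                    · rw [ek2, h2'] at h'; exact h0u h'
                    · rw [show k+3 = 3*j+4 by omega, hrα4 j] at h''; exact hnn h''
                have e5 : α (3*k+5) = 0 := by rw [ha5, hc2, ek2, h2']; ring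
                exact ⟨Or.inl ⟨e5, by rw [ha6, e5]; ring⟩,
                  iff_of_false (by rw [e5]; exact h0u) hfalse⟩
            · -- k = 3j+2
              have hpj1 := (IH (j+1) (by omega)).1
              have ek2 : α (k+2) = -u := by
                rw [show k+2 = 3*j+4 by omega]; exact hrα4 j
              have ek3 : α (k+3) = α (3*(j+1)+2) := by rw [show k+3 = 3*(j+1)+2 by omega]
              have ek4 : α (k+4) = α (3*(j+1)+3) := by rw [show k+4 = 3*(j+1)+3 by omega]
              have hc2 : α (3*k+2) = 0 := by
                rcases hpair with ⟨h, _⟩ | ⟨h, _⟩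
                · exact h
                · exfalso
                  rcases hD.mp h with h' | ⟨h', _⟩
                  · rw [ek2] at h'; exact hnn h'
                  · rw [ek2] at h'; exact hnz h'
              have e5 : α (3*k+5) = u := by rw [ha5, hc2, ek2]; ring
              refine ⟨Or.inr ⟨e5, by rw [ha6, e5]; ring⟩, iff_of_true e5 ?_⟩
              rcases hpj1 with ⟨h1, h2'⟩ | ⟨h1, h2'⟩
              · exact Or.inr ⟨by rw [ek3, h1], by rw [ek4, h2']⟩
              · exact Or.inl (by rw [ek3, h1])
        obtain ⟨hpair', hD'⟩ := main
        have hb6 : β (3*k+6) = 1 := by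
          rw [hrβ6 k, hv]
          rcases hpair' with ⟨h1, _⟩ | ⟨_, h1⟩ <;> rw [h1] <;> ring
        have hb7 : β (3*k+7) = 1 := by
          have h := hrβ4 (k+1)
          rw [show 3*(k+1)+4 = 3*k+7 by omega, show 3*(k+1)+3 = 3*k+6 by omega,
            show 3*(k+1)+2 = 3*k+5 by omega, show k+1+2 = k+3 by omega,
            hbk3, hb6, hb3k5] at h
          rw [h]; norm_num
        have hb8 : β (3*k+8) = 1 := by
          have h := hrβ5 (k+1)
          rw [show 3*(k+1)+5 = 3*k+8 by omega, show 3*(k+1)+4 = 3*k+7 by omega,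
            hu, hv, hb7] at h
          rw [h]; norm_num
        rw [show 3*(k+1)+2 = 3*k+5 by omega, show 3*(k+1)+3 = 3*k+6 by omega,
          show 3*(k+1)+4 = 3*k+7 by omega, show 3*(k+1)+5 = 3*k+8 by omega,
          show k+1+2 = k+3 by omega, show k+1+3 = k+4 by omega]
        exact ⟨hpair', hb6, hb7, hb8, hD'⟩
  intro k
  obtain ⟨hpair, hb, _⟩ := key k
  refine ⟨hpair, ?_, hb⟩
  rcases hpair with ⟨h1, _⟩ | ⟨_, h1⟩ <;> rw [h1] <;> ring
end

section
/- Let p be an odd prime such that there exists u ∈ ℤ/pℤ with u² = 3 (i.e. 3 is a quadratic residue mod p or p = 3). For integers u₀, v₀ with u₀ ≡ u (mod p) and v₀ ≡ 1 (mod p), the rational sequences α_i, β_i defined over ℚ by the Theorem B2 recurrences with parameters (u₀, v₀) satisfy: whenever all β₁,…,β_n are nonzero (so the recursion is defined up to index n), each β_i for i ≥ 1 is a p-adic unit, and hence β_i ≠ 0. -/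
/-!
Reduce the recurrence modulo `p`. Since `u₀² ≡ 3` and `v₀ ≡ 1`, the reduced recurrence has an
explicit solution: `β i ≡ 1` except `β 2 ≡ 2`, and `α i ≡ u * a i` with `a i ∈ {-1, 0, 1}` governed
by ternary digits. All denominators met along the way reduce to `±2` or `1`, units as `p` is odd,
so strong induction shows that every `α i`, `β i` is a `p`-adic integer with this reduction; in
particular each `β i` is a `p`-adic unit.
-/

open PadicInt

namespace TheoremB2

variable {p : ℕ} [Fact p.Prime]

variable (p) in
/-- The pairs `(q, r)` such that `q` is a `p`-adic integer reducing to `r` mod `p`; as a subring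
of `ℚ × ZMod p` it is closed under the ring operations for free. -/
noncomputable def padicResidues : Subring (ℚ × ZMod p) :=
  (Coe.ringHom.prod toZMod).range.comap ((Rat.castHom ℚ_[p]).prodMap (RingHom.id _))

theorem mem_padicResidues_iff {q : ℚ} {r : ZMod p} :
    (q, r) ∈ padicResidues p ↔ ∃ x : ℤ_[p], (x : ℚ_[p]) = q ∧ toZMod x = r :=
  exists_congr fun _ ↦ Prod.ext_iff

theorem intCast_mem_padicResidues (m : ℤ) : ((m : ℚ), (m : ZMod p)) ∈ padicResidues p :=
  intCast_mem _ m

theorem isUnit_of_toZMod_ne_zero {x : ℤ_[p]} (hx : toZMod x ≠ 0) : IsUnit x := by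
  by_contra h
  exact hx (by rwa [← RingHom.mem_ker, ker_toZMod, IsLocalRing.mem_maximalIdeal, mem_nonunits_iff])

theorem div_mem_padicResidues {q₁ q₂ : ℚ} {r₁ r₂ : ZMod p} (h₁ : (q₁, r₁) ∈ padicResidues p)
    (h₂ : (q₂, r₂) ∈ padicResidues p) (hr₂ : r₂ ≠ 0) : (q₁ / q₂, r₁ / r₂) ∈ padicResidues p := by
  obtain ⟨x, hx, rfl⟩ := mem_padicResidues_iff.1 h₁
  obtain ⟨y, hy, rfl⟩ := mem_padicResidues_iff.1 h₂
  obtain ⟨w, rfl⟩ := isUnit_of_toZMod_ne_zero hr₂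
  refine mem_padicResidues_iff.2 ⟨x * ↑w⁻¹, ?_, ?_⟩
  · rw [Rat.cast_div, ← hx, ← hy]
    exact (map_mul Coe.ringHom _ _).trans (by rw [map_units_inv]; rfl)
  · rw [map_mul, map_units_inv, div_eq_mul_inv]

theorem padicValRat_eq_zero_of_mem_padicResidues {q : ℚ} {r : ZMod p}
    (h : (q, r) ∈ padicResidues p) (hr : r ≠ 0) : padicValRat p q = 0 := by
  obtain ⟨x, hx, rfl⟩ := mem_padicResidues_iff.1 h
  have hxu := isUnit_of_toZMod_ne_zero hr
  have hnorm := Padic.norm_eq_zpow_neg_valuation (coe_ne_zero.2 hxu.ne_zero)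
  rwa [← norm_def, isUnit_iff.1 hxu, eq_comm, zpow_eq_one_iff_right₀ (by positivity)
    (mod_cast (Fact.out : p.Prime).ne_one), neg_eq_zero, hx, Padic.valuation_ratCast] at hnorm

def ternaryPattern : ℕ → ℤ
  | 0 => 1
  | n + 1 =>
    if (n + 1) % 3 = 0 then 1 else if (n + 1) % 3 = 2 then 0 else 1 - ternaryPattern ((n + 1) / 3)

theorem ternaryPattern_three_mul (j : ℕ) : ternaryPattern (3 * j) = 1 := by
  cases j with
  | zero => rw [ternaryPattern]
  | succ j => rw [show 3 * (j + 1) = 3 * j + 2 + 1 by ring, ternaryPattern, if_pos (by omega)]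

theorem ternaryPattern_three_mul_add_one (j : ℕ) :
    ternaryPattern (3 * j + 1) = 1 - ternaryPattern j := by
  rw [ternaryPattern, if_neg (by omega), if_neg (by omega), show (3 * j + 1) / 3 = j by omega]

theorem ternaryPattern_three_mul_add_two (j : ℕ) : ternaryPattern (3 * j + 2) = 0 := by
  rw [ternaryPattern, if_neg (by omega), if_pos (by omega)]

theorem ternaryPattern_mul_one_sub_self (n : ℕ) :
    ternaryPattern n * (1 - ternaryPattern n) = 0 := by
  induction n using Nat.strong_induction_on with
  | _ n ih =>
    obtain ⟨j, rfl | rfl | rfl⟩ : ∃ j, n = 3 * j ∨ n = 3 * j + 1 ∨ n = 3 * j + 2 :=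
      ⟨n / 3, by omega⟩
    · simp [ternaryPattern_three_mul]
    · rw [ternaryPattern_three_mul_add_one]
      linear_combination ih j (by omega)
    · simp [ternaryPattern_three_mul_add_two]

/-- `α i ≡ u * alphaResidue i` and `β i ≡ betaResidue i` mod `p`: these solve the recurrence with
`(u₀, v₀)` replaced by `(u, 1)`. The index `0` is unused. -/
def alphaResidue : ℕ → ℤ
  | 0 => 0
  | 1 => -1
  | k + 2 => ternaryPattern k - ternaryPattern (k + 1)

theorem alphaResidue_two : alphaResidue 2 = 1 := by
  change ternaryPattern (3 * 0) - ternaryPattern (3 * 0 + 1) = 1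
  rw [ternaryPattern_three_mul_add_one, ternaryPattern_three_mul]
  norm_num

theorem alphaResidue_three : alphaResidue 3 = 0 := by
  change ternaryPattern (3 * 0 + 1) - ternaryPattern (3 * 0 + 2) = 0
  rw [ternaryPattern_three_mul_add_one, ternaryPattern_three_mul_add_two,
    show ternaryPattern 0 = 1 from ternaryPattern_three_mul 0]
  norm_num

theorem alphaResidue_three_mul_add_four (k : ℕ) : alphaResidue (3 * k + 4) = -1 := by
  rw [alphaResidue, ternaryPattern_three_mul_add_two, show 3 * k + 2 + 1 = 3 * (k + 1) by ring,
    ternaryPattern_three_mul]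
  norm_num

theorem alphaResidue_three_mul_add_five (k : ℕ) :
    alphaResidue (3 * k + 5) = ternaryPattern (k + 1) := by
  rw [alphaResidue, show 3 * k + 3 = 3 * (k + 1) by ring, ternaryPattern_three_mul,
    ternaryPattern_three_mul_add_one]
  ring

theorem alphaResidue_three_mul_add_five_eq_sub (k : ℕ) :
    alphaResidue (3 * k + 5) = alphaResidue (3 * k + 2) - alphaResidue (k + 2) := by
  rw [alphaResidue_three_mul_add_five, alphaResidue, alphaResidue, ternaryPattern_three_mul,
    ternaryPattern_three_mul_add_one]
  ring

theorem alphaResidue_three_mul_add_six (k : ℕ) :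
    alphaResidue (3 * k + 6) = 1 - alphaResidue (3 * k + 5) := by
  rw [alphaResidue_three_mul_add_five, alphaResidue, show 3 * k + 4 = 3 * (k + 1) + 1 by ring,
    show 3 * (k + 1) + 1 + 1 = 3 * (k + 1) + 2 by ring, ternaryPattern_three_mul_add_one,
    ternaryPattern_three_mul_add_two]
  ring

def betaResidue (i : ℕ) : ℤ := if i = 2 then 2 else 1

theorem betaResidue_of_ne_two {i : ℕ} (hi : i ≠ 2) : betaResidue i = 1 := if_neg hi

theorem betaResidue_add_two (k : ℕ) : betaResidue (k + 2) = betaResidue (3 * k + 2) := by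
  simp only [betaResidue]
  congr 1
  simp only [eq_iff_iff]
  omega

theorem betaResidue_ne_zero {R : Type*} [Ring R] [Nontrivial R] (h2 : (2 : R) ≠ 0) (i : ℕ) :
    (betaResidue i : R) ≠ 0 := by
  unfold betaResidue
  split_ifs <;> simp [h2]

structure B2Recurrence (u₀ v₀ : ℤ) (n : ℕ) (α β : ℕ → ℚ) : Prop where
  α_one : 1 ≤ n → α 1 = -u₀
  α_two : 2 ≤ n → α 2 = u₀ * (2*v₀ - 1 - u₀^2) / (v₀ - u₀^2)
  α_three : 3 ≤ n → α 3 = -u₀ * (v₀ - 1) / (v₀ - u₀^2)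
  β_one : 1 ≤ n → β 1 = 1
  β_two : 2 ≤ n → β 2 = u₀^2 - v₀
  β_three : 3 ≤ n → β 3 = (u₀^2 + u₀^4 + v₀^3 - 3*u₀^2*v₀) / (v₀ - u₀^2)^2
  α_three_mul_add_four : ∀ k : ℕ, 3*k+4 ≤ n → α (3*k+4) = -u₀
  β_three_mul_add_four : ∀ k : ℕ, 3*k+4 ≤ n → β (3*k+4) = β (k+2) / (β (3*k+3) * β (3*k+2))
  β_three_mul_add_five : ∀ k : ℕ, 3*k+5 ≤ n → β (3*k+5) = u₀^2 - v₀ - β (3*k+4)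
  α_three_mul_add_five : ∀ k : ℕ, 3*k+5 ≤ n →
    α (3*k+5) = u₀ - (α (k+2) + u₀*v₀ - α (3*k+2) * β (3*k+4)) / β (3*k+5)
  α_three_mul_add_six : ∀ k : ℕ, 3*k+6 ≤ n → α (3*k+6) = u₀ - α (3*k+5)
  β_three_mul_add_six : ∀ k : ℕ, 3*k+6 ≤ n → β (3*k+6) = v₀ - α (3*k+5) * α (3*k+6)

def HasB2Residues (u : ZMod p) (α β : ℕ → ℚ) (i : ℕ) : Prop :=
  (α i, u * alphaResidue i) ∈ padicResidues p ∧ (β i, (betaResidue i : ZMod p)) ∈ padicResidues p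

namespace B2Recurrence

variable {u : ZMod p} {u₀ v₀ : ℤ} {n : ℕ} {α β : ℕ → ℚ}

theorem hasB2Residues_one (h : B2Recurrence u₀ v₀ n α β) (hU : ((u₀ : ℚ), u) ∈ padicResidues p)
    (hn : 1 ≤ n) : HasB2Residues u α β 1 := by
  refine ⟨?_, ?_⟩
  · have : (α 1, -u) ∈ padicResidues p := by rw [h.α_one hn]; exact neg_mem hU
    simpa [alphaResidue] using this
  · rw [h.β_one hn, betaResidue_of_ne_two (by norm_num), Int.cast_one]
    exact one_mem _

theorem hasB2Residues_two (h : B2Recurrence u₀ v₀ n α β) (hu : u ^ 2 = 3) (h2 : (2 : ZMod p) ≠ 0)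
    (hU : ((u₀ : ℚ), u) ∈ padicResidues p) (hV : ((v₀ : ℚ), (1 : ZMod p)) ∈ padicResidues p)
    (hn : 2 ≤ n) : HasB2Residues u α β 2 := by
  have hden : (1 : ZMod p) - u ^ 2 ≠ 0 := by
    rw [hu]; exact fun h ↦ h2 (by linear_combination -h)
  have hTwo : ((2 : ℚ), (2 : ZMod p)) ∈ padicResidues p := by
    exact_mod_cast intCast_mem_padicResidues 2
  refine ⟨?_, ?_⟩
  · have key : (α 2, u * (2 * 1 - 1 - u ^ 2) / (1 - u ^ 2)) ∈ padicResidues p := by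
      rw [h.α_two hn]
      exact div_mem_padicResidues (mul_mem hU (sub_mem (sub_mem (mul_mem hTwo hV) (one_mem _))
        (pow_mem hU 2))) (sub_mem hV (pow_mem hU 2)) hden
    convert key using 2
    rw [alphaResidue_two, Int.cast_one, eq_div_iff hden]
    ring
  · have key : (β 2, u ^ 2 - 1) ∈ padicResidues p := by
      rw [h.β_two hn]; exact sub_mem (pow_mem hU 2) hV
    convert key using 2
    rw [hu, betaResidue]
    norm_num

theorem hasB2Residues_three (h : B2Recurrence u₀ v₀ n α β) (hu : u ^ 2 = 3)
    (h2 : (2 : ZMod p) ≠ 0) (hU : ((u₀ : ℚ), u) ∈ padicResidues p)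
    (hV : ((v₀ : ℚ), (1 : ZMod p)) ∈ padicResidues p) (hn : 3 ≤ n) :
    HasB2Residues u α β 3 := by
  have hden : (1 : ZMod p) - u ^ 2 ≠ 0 := by
    rw [hu]; exact fun h ↦ h2 (by linear_combination -h)
  have hThree : ((3 : ℚ), (3 : ZMod p)) ∈ padicResidues p := by
    exact_mod_cast intCast_mem_padicResidues 3
  refine ⟨?_, ?_⟩
  · have key : (α 3, -u * (1 - 1) / (1 - u ^ 2)) ∈ padicResidues p := by
      rw [h.α_three hn]
      exact div_mem_padicResidues (mul_mem (neg_mem hU) (sub_mem hV (one_mem _)))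
        (sub_mem hV (pow_mem hU 2)) hden
    convert key using 2
    simp [alphaResidue_three]
  · have key : (β 3, (u ^ 2 + u ^ 4 + 1 ^ 3 - 3 * u ^ 2 * 1) / (1 - u ^ 2) ^ 2)
        ∈ padicResidues p := by
      rw [h.β_three hn]
      exact div_mem_padicResidues (sub_mem (add_mem (add_mem (pow_mem hU 2) (pow_mem hU 4))
        (pow_mem hV 3)) (mul_mem (mul_mem hThree (pow_mem hU 2)) hV))
        (pow_mem (sub_mem hV (pow_mem hU 2)) 2) (pow_ne_zero 2 hden)
    convert key using 2
    rw [betaResidue_of_ne_two (by norm_num), Int.cast_one, eq_div_iff (pow_ne_zero 2 hden)]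
    ring

theorem hasB2Residues_three_mul_add_four (h : B2Recurrence u₀ v₀ n α β) (h2 : (2 : ZMod p) ≠ 0)
    (hU : ((u₀ : ℚ), u) ∈ padicResidues p) {k : ℕ} (hn : 3 * k + 4 ≤ n)
    (ih : ∀ j, 1 ≤ j → j < 3 * k + 4 → HasB2Residues u α β j) :
    HasB2Residues u α β (3 * k + 4) := by
  refine ⟨?_, ?_⟩
  · rw [h.α_three_mul_add_four k hn, alphaResidue_three_mul_add_four]
    simpa using neg_mem hU
  · have hb := betaResidue_ne_zero h2 (3 * k + 2)
    have key : (β (3 * k + 4), (betaResidue (k + 2) : ZMod p) /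
        (betaResidue (3 * k + 3) * betaResidue (3 * k + 2))) ∈ padicResidues p := by
      rw [h.β_three_mul_add_four k hn]
      exact div_mem_padicResidues (ih (k + 2) (by omega) (by omega)).2
        (mul_mem (ih (3 * k + 3) (by omega) (by omega)).2 (ih (3 * k + 2) (by omega) (by omega)).2)
        (mul_ne_zero (betaResidue_ne_zero h2 _) hb)
    convert key using 2
    rw [betaResidue_add_two k, betaResidue_of_ne_two (show 3 * k + 4 ≠ 2 by omega),
      betaResidue_of_ne_two (show 3 * k + 3 ≠ 2 by omega), Int.cast_one, one_mul, div_self hb]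

theorem hasB2Residues_three_mul_add_five (h : B2Recurrence u₀ v₀ n α β) (hu : u ^ 2 = 3)
    (hU : ((u₀ : ℚ), u) ∈ padicResidues p) (hV : ((v₀ : ℚ), (1 : ZMod p)) ∈ padicResidues p)
    {k : ℕ} (hn : 3 * k + 5 ≤ n) (ih : ∀ j, 1 ≤ j → j < 3 * k + 5 → HasB2Residues u α β j) :
    HasB2Residues u α β (3 * k + 5) := by
  have hβ4 := (ih (3 * k + 4) (by omega) (by omega)).2
  rw [betaResidue_of_ne_two (by omega), Int.cast_one] at hβ4
  have hβ5 : (β (3 * k + 5), (1 : ZMod p)) ∈ padicResidues p := by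
    have key : (β (3 * k + 5), u ^ 2 - 1 - 1) ∈ padicResidues p := by
      rw [h.β_three_mul_add_five k hn]; exact sub_mem (sub_mem (pow_mem hU 2) hV) hβ4
    convert key using 2
    rw [hu]; norm_num
  refine ⟨?_, by rwa [betaResidue_of_ne_two (by omega), Int.cast_one]⟩
  have key : (α (3 * k + 5), u - (u * alphaResidue (k + 2) + u * 1 -
      u * alphaResidue (3 * k + 2) * 1) / 1) ∈ padicResidues p := by
    rw [h.α_three_mul_add_five k hn]
    exact sub_mem hU (div_mem_padicResidues (sub_mem (add_mem (ih (k + 2) (by omega) (by omega)).1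
      (mul_mem hU hV)) (mul_mem (ih (3 * k + 2) (by omega) (by omega)).1 hβ4)) hβ5 one_ne_zero)
  convert key using 2
  rw [alphaResidue_three_mul_add_five_eq_sub]
  push_cast
  ring

theorem hasB2Residues_three_mul_add_six (h : B2Recurrence u₀ v₀ n α β)
    (hU : ((u₀ : ℚ), u) ∈ padicResidues p) (hV : ((v₀ : ℚ), (1 : ZMod p)) ∈ padicResidues p)
    {k : ℕ} (hn : 3 * k + 6 ≤ n) (ih : ∀ j, 1 ≤ j → j < 3 * k + 6 → HasB2Residues u α β j) :
    HasB2Residues u α β (3 * k + 6) := by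
  have hα5 := (ih (3 * k + 5) (by omega) (by omega)).1
  have hα6 : (α (3 * k + 6), u * alphaResidue (3 * k + 6)) ∈ padicResidues p := by
    have key : (α (3 * k + 6), u - u * alphaResidue (3 * k + 5)) ∈ padicResidues p := by
      rw [h.α_three_mul_add_six k hn]; exact sub_mem hU hα5
    convert key using 2
    rw [alphaResidue_three_mul_add_six]
    push_cast
    ring
  refine ⟨hα6, ?_⟩
  have key : (β (3 * k + 6), 1 - u * alphaResidue (3 * k + 5) * (u * alphaResidue (3 * k + 6)))
      ∈ padicResidues p := by
    rw [h.β_three_mul_add_six k hn]; exact sub_mem hV (mul_mem hα5 hα6)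
  convert key using 2
  have hdigit : ((alphaResidue (3 * k + 5) * (1 - alphaResidue (3 * k + 5)) : ℤ) : ZMod p) = 0 := by
    rw [alphaResidue_three_mul_add_five, ternaryPattern_mul_one_sub_self, Int.cast_zero]
  rw [betaResidue_of_ne_two (by omega), alphaResidue_three_mul_add_six]
  push_cast at hdigit ⊢
  linear_combination u ^ 2 * hdigit

theorem hasB2Residues (h : B2Recurrence u₀ v₀ n α β) (hu : u ^ 2 = 3) (h2 : (2 : ZMod p) ≠ 0)
    (hU : ((u₀ : ℚ), u) ∈ padicResidues p) (hV : ((v₀ : ℚ), (1 : ZMod p)) ∈ padicResidues p)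
    (i : ℕ) (hi : 1 ≤ i) (hin : i ≤ n) : HasB2Residues u α β i := by
  induction i using Nat.strong_induction_on with
  | _ i ih =>
    have ih' : ∀ j, 1 ≤ j → j < i → HasB2Residues u α β j :=
      fun j hj hji ↦ ih j hji hj (by omega)
    obtain ⟨k, rfl | rfl | rfl⟩ | hi3 : (∃ k, i = 3 * k + 4 ∨ i = 3 * k + 5 ∨ i = 3 * k + 6) ∨
        i ≤ 3 := by
      by_cases hi3 : i ≤ 3
      · exact .inr hi3
      · exact .inl ⟨(i - 4) / 3, by omega⟩
    · exact h.hasB2Residues_three_mul_add_four h2 hU hin ih'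
    · exact h.hasB2Residues_three_mul_add_five hu hU hV hin ih'
    · exact h.hasB2Residues_three_mul_add_six hU hV hin ih'
    · interval_cases i
      · exact h.hasB2Residues_one hU hin
      · exact h.hasB2Residues_two hu h2 hU hV hin
      · exact h.hasB2Residues_three hu h2 hU hV hin

end B2Recurrence

end TheoremB2

open TheoremB2 in
theorem stmt16_general (p : ℕ) [Fact p.Prime] (hodd : p ≠ 2)
    (u : ZMod p) (hu : u^2 = 3)
    (u₀ v₀ : ℤ) (hu₀ : (u₀ : ZMod p) = u) (hv₀ : (v₀ : ZMod p) = 1)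
    (n : ℕ) (α β : ℕ → ℚ)
    (hα1 : 1 ≤ n → α 1 = -u₀)
    (hα2 : 2 ≤ n → α 2 = u₀ * (2*v₀ - 1 - u₀^2) / (v₀ - u₀^2))
    (hα3 : 3 ≤ n → α 3 = -u₀ * (v₀ - 1) / (v₀ - u₀^2))
    (hβ1 : 1 ≤ n → β 1 = 1)
    (hβ2 : 2 ≤ n → β 2 = u₀^2 - v₀)
    (hβ3 : 3 ≤ n → β 3 = (u₀^2 + u₀^4 + v₀^3 - 3*u₀^2*v₀) / (v₀ - u₀^2)^2)
    (hrα4 : ∀ k : ℕ, 3*k+4 ≤ n → α (3*k+4) = -u₀)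
    (hrβ4 : ∀ k : ℕ, 3*k+4 ≤ n → β (3*k+4) = β (k+2) / (β (3*k+3) * β (3*k+2)))
    (hrβ5 : ∀ k : ℕ, 3*k+5 ≤ n → β (3*k+5) = u₀^2 - v₀ - β (3*k+4))
    (hrα5 : ∀ k : ℕ, 3*k+5 ≤ n →
      α (3*k+5) = u₀ - (α (k+2) + u₀*v₀ - α (3*k+2) * β (3*k+4)) / β (3*k+5))
    (hrα6 : ∀ k : ℕ, 3*k+6 ≤ n → α (3*k+6) = u₀ - α (3*k+5))
    (hrβ6 : ∀ k : ℕ, 3*k+6 ≤ n → β (3*k+6) = v₀ - α (3*k+5) * α (3*k+6)) :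
    ∀ i : ℕ, 1 ≤ i → i ≤ n → padicValRat p (β i) = 0 := by
  have hrec : B2Recurrence u₀ v₀ n α β :=
    ⟨hα1, hα2, hα3, hβ1, hβ2, hβ3, hrα4, hrβ4, hrβ5, hrα5, hrα6, hrβ6⟩
  have h2 : (2 : ZMod p) ≠ 0 := Ring.two_ne_zero (by rwa [ZMod.ringChar_zmod_n])
  have hU := hu₀ ▸ intCast_mem_padicResidues u₀
  have hV := hv₀ ▸ intCast_mem_padicResidues v₀
  intro i hi hin
  exact padicValRat_eq_zero_of_mem_padicResidues
    (hrec.hasB2Residues hu h2 hU hV i hi hin).2 (betaResidue_ne_zero h2 i)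

theorem stmt16 (p : ℕ) [Fact p.Prime] (hodd : p ≠ 2)
    (u : ZMod p) (hu : u^2 = 3)
    (u₀ v₀ : ℤ) (hu₀ : (u₀ : ZMod p) = u) (hv₀ : (v₀ : ZMod p) = 1)
    (n : ℕ) (α β : ℕ → ℚ)
    (hα1 : 1 ≤ n → α 1 = -u₀)
    (hα2 : 2 ≤ n → α 2 = u₀ * (2*v₀ - 1 - u₀^2) / (v₀ - u₀^2))
    (hα3 : 3 ≤ n → α 3 = -u₀ * (v₀ - 1) / (v₀ - u₀^2))
    (hβ1 : 1 ≤ n → β 1 = 1)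
    (hβ2 : 2 ≤ n → β 2 = u₀^2 - v₀)
    (hβ3 : 3 ≤ n → β 3 = (u₀^2 + u₀^4 + v₀^3 - 3*u₀^2*v₀) / (v₀ - u₀^2)^2)
    (hrα4 : ∀ k : ℕ, 3*k+4 ≤ n → α (3*k+4) = -u₀)
    (hrβ4 : ∀ k : ℕ, 3*k+4 ≤ n → β (3*k+4) = β (k+2) / (β (3*k+3) * β (3*k+2)))
    (hrβ5 : ∀ k : ℕ, 3*k+5 ≤ n → β (3*k+5) = u₀^2 - v₀ - β (3*k+4))
    (hrα5 : ∀ k : ℕ, 3*k+5 ≤ n →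
      α (3*k+5) = u₀ - (α (k+2) + u₀*v₀ - α (3*k+2) * β (3*k+4)) / β (3*k+5))
    (hrα6 : ∀ k : ℕ, 3*k+6 ≤ n → α (3*k+6) = u₀ - α (3*k+5))
    (hrβ6 : ∀ k : ℕ, 3*k+6 ≤ n → β (3*k+6) = v₀ - α (3*k+5) * α (3*k+6))
    (hne : ∀ i : ℕ, 1 ≤ i → i ≤ n → β i ≠ 0) :
    ∀ i : ℕ, 1 ≤ i → i ≤ n → padicValRat p (β i) = 0 :=
  stmt16_general p hodd u hu u₀ v₀ hu₀ hv₀ n α β hα1 hα2 hα3 hβ1 hβ2 hβ3 hrα4 hrβ4 hrβ5 hrα5 hrα6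
    hrβ6
end
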